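/- arXiv:1910.01889 — 4 statements merged into one kernel-verified Lean document; each statement's English description precedes it below -/
import Mathlib

section
/- Let S_e(r,z) be the vector field with cylindrical components S_e = −(r/a) α ρ^{α−1} (sin((α−1)φ − φ₀), 0, cos((α−1)φ − φ₀)), where (ρ,φ) are local polar coordinates in the (r,z) half-plane centered at the point (a, z₀) with a > 0. Then for every integer k, div_k S_e = −(2α/a) ρ^{α−1} sin((α−1)φ − φ₀). -/
open Complex

/-- Let `S_e` be the electric principal singular part, with cylindrical components
`S_e = −(r/a) α ρ^(α−1) (sin((α−1)φ − φ₀), 0, cos((α−1)φ − φ₀))`, where `(ρ,φ)` are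
local polar coordinates centered at `(a, z₀)` (with `a > 0`) in the meridian
half-plane, i.e. `r = a + ρ cos(φ + φ₀)`, `z = z₀ + ρ sin(φ + φ₀)` on an open set
`U` away from the corner.  Then for every integer `k`,
`div_k S_e = −(2α/a) ρ^(α−1) sin((α−1)φ − φ₀)`. -/
theorem divk_electric_singular_part
    (a z₀ φ₀ α : ℝ) (ha : 0 < a) (hα₁ : 1/2 < α) (hα₂ : α < 1)
    (U : Set (ℝ × ℝ)) (hU : IsOpen U)
    (ρ φ : ℝ → ℝ → ℝ)
    (hρ : ContDiffOn ℝ (⊤ : ℕ∞) (fun p : ℝ × ℝ => ρ p.1 p.2) U)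
    (hφ : ContDiffOn ℝ (⊤ : ℕ∞) (fun p : ℝ × ℝ => φ p.1 p.2) U)
    (hρpos : ∀ p ∈ U, 0 < ρ p.1 p.2)
    (hcr : ∀ p ∈ U, p.1 = a + ρ p.1 p.2 * Real.cos (φ p.1 p.2 + φ₀))
    (hcz : ∀ p ∈ U, p.2 = z₀ + ρ p.1 p.2 * Real.sin (φ p.1 p.2 + φ₀))
    (Sr Sθ Sz : ℝ → ℝ → ℂ)
    (hSr : ∀ r z, Sr r z =
      ((-(r / a) * α * ρ r z ^ (α - 1) * Real.sin ((α - 1) * φ r z - φ₀) : ℝ) : ℂ))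
    (hSθ : ∀ r z, Sθ r z = 0)
    (hSz : ∀ r z, Sz r z =
      ((-(r / a) * α * ρ r z ^ (α - 1) * Real.cos ((α - 1) * φ r z - φ₀) : ℝ) : ℂ))
    (k : ℤ) (r z : ℝ) (hmem : (r, z) ∈ U) (hr : 0 < r) :
    (1 / (r : ℂ)) * deriv (fun r' : ℝ => ((r' : ℝ) : ℂ) * Sr r' z) r
      + (Complex.I * (k : ℂ) / (r : ℂ)) * Sθ r z
      + deriv (fun z' => Sz r z') z
    = ((-(2 * α / a) * ρ r z ^ (α - 1) * Real.sin ((α - 1) * φ r z - φ₀) : ℝ) : ℂ) := by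
  have hPpos : 0 < ρ r z := hρpos (r, z) hmem
  have hPne : ρ r z ≠ 0 := ne_of_gt hPpos
  have hane : a ≠ 0 := ne_of_gt ha
  have hrne : r ≠ 0 := ne_of_gt hr
  -- two-variable differentiability at (r, z)
  have hρd : DifferentiableAt ℝ (fun p : ℝ × ℝ => ρ p.1 p.2) (r, z) :=
    (hρ.contDiffAt (hU.mem_nhds hmem)).differentiableAt (by simp)
  have hφd : DifferentiableAt ℝ (fun p : ℝ × ℝ => φ p.1 p.2) (r, z) :=
    (hφ.contDiffAt (hU.mem_nhds hmem)).differentiableAt (by simp)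
  have hcurve_r : DifferentiableAt ℝ (fun r' : ℝ => ((r', z) : ℝ × ℝ)) r :=
    differentiableAt_id.prodMk (differentiableAt_const z)
  have hcurve_z : DifferentiableAt ℝ (fun z' : ℝ => ((r, z') : ℝ × ℝ)) z :=
    (differentiableAt_const r).prodMk differentiableAt_id
  have hρr : DifferentiableAt ℝ (fun r' => ρ r' z) r := by have := hρd.comp r hcurve_r; exact this
  have hφr : DifferentiableAt ℝ (fun r' => φ r' z) r := by have := hφd.comp r hcurve_r; exact this
  have hρz : DifferentiableAt ℝ (fun z' => ρ r z') z := by have := hρd.comp z hcurve_z; exact this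
  have hφz : DifferentiableAt ℝ (fun z' => φ r z') z := by have := hφd.comp z hcurve_z; exact this
  set Pr := deriv (fun r' => ρ r' z) r with hPrdef
  set Fr := deriv (fun r' => φ r' z) r with hFrdef
  set Pz := deriv (fun z' => ρ r z') z with hPzdef
  set Fz := deriv (fun z' => φ r z') z with hFzdef
  have hPr : HasDerivAt (fun r' => ρ r' z) Pr r := hρr.hasDerivAt
  have hFr : HasDerivAt (fun r' => φ r' z) Fr r := hφr.hasDerivAt
  have hPz : HasDerivAt (fun z' => ρ r z') Pz z := hρz.hasDerivAt
  have hFz : HasDerivAt (fun z' => φ r z') Fz z := hφz.hasDerivAt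
  -- nearby points stay in U
  have hnbd_r : ∀ᶠ r' in nhds r, ((r', z) : ℝ × ℝ) ∈ U :=
    hcurve_r.continuousAt.preimage_mem_nhds (hU.mem_nhds hmem)
  have hnbd_z : ∀ᶠ z' in nhds z, ((r, z') : ℝ × ℝ) ∈ U :=
    hcurve_z.continuousAt.preimage_mem_nhds (hU.mem_nhds hmem)
  set ψ := φ r z + φ₀ with hψdef
  -- implicit differentiation of the constraint equations
  have eqA : Pr * Real.cos ψ + ρ r z * (-Real.sin ψ * Fr) = 1 := by
    have hD : HasDerivAt (fun r' => a + ρ r' z * Real.cos (φ r' z + φ₀))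
        (Pr * Real.cos ψ + ρ r z * (-Real.sin ψ * Fr)) r :=
      (hPr.mul ((hFr.add_const φ₀).cos)).const_add a
    have hev : (fun r' : ℝ => r') =ᶠ[nhds r]
        fun r' => a + ρ r' z * Real.cos (φ r' z + φ₀) := by
      filter_upwards [hnbd_r] with r' hr' using hcr (r', z) hr'
    exact (hD.congr_of_eventuallyEq hev).unique (hasDerivAt_id r)
  have eqB : Pr * Real.sin ψ + ρ r z * (Real.cos ψ * Fr) = 0 := by
    have hD : HasDerivAt (fun r' => z₀ + ρ r' z * Real.sin (φ r' z + φ₀))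
        (Pr * Real.sin ψ + ρ r z * (Real.cos ψ * Fr)) r :=
      (hPr.mul ((hFr.add_const φ₀).sin)).const_add z₀
    have hev : (fun _ : ℝ => z) =ᶠ[nhds r]
        fun r' => z₀ + ρ r' z * Real.sin (φ r' z + φ₀) := by
      filter_upwards [hnbd_r] with r' hr' using hcz (r', z) hr'
    exact (hD.congr_of_eventuallyEq hev).unique (hasDerivAt_const r z)
  have eqC : Pz * Real.cos ψ + ρ r z * (-Real.sin ψ * Fz) = 0 := by
    have hD : HasDerivAt (fun z' => a + ρ r z' * Real.cos (φ r z' + φ₀))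
        (Pz * Real.cos ψ + ρ r z * (-Real.sin ψ * Fz)) z :=
      (hPz.mul ((hFz.add_const φ₀).cos)).const_add a
    have hev : (fun _ : ℝ => r) =ᶠ[nhds z]
        fun z' => a + ρ r z' * Real.cos (φ r z' + φ₀) := by
      filter_upwards [hnbd_z] with z' hz' using hcr (r, z') hz'
    exact (hD.congr_of_eventuallyEq hev).unique (hasDerivAt_const z r)
  have eqD : Pz * Real.sin ψ + ρ r z * (Real.cos ψ * Fz) = 1 := by
    have hD : HasDerivAt (fun z' => z₀ + ρ r z' * Real.sin (φ r z' + φ₀))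
        (Pz * Real.sin ψ + ρ r z * (Real.cos ψ * Fz)) z :=
      (hPz.mul ((hFz.add_const φ₀).sin)).const_add z₀
    have hev : (fun z' : ℝ => z') =ᶠ[nhds z]
        fun z' => z₀ + ρ r z' * Real.sin (φ r z' + φ₀) := by
      filter_upwards [hnbd_z] with z' hz' using hcz (r, z') hz'
    exact (hD.congr_of_eventuallyEq hev).unique (hasDerivAt_id z)
  have hpyth := Real.sin_sq_add_cos_sq ψ
  have hPr_eq : Pr = Real.cos ψ := by
    linear_combination Real.cos ψ * eqA + Real.sin ψ * eqB - Pr * hpyth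
  have hPFr : ρ r z * Fr = -Real.sin ψ := by
    linear_combination (-Real.sin ψ) * eqA + Real.cos ψ * eqB
      - (ρ r z * Fr) * hpyth
  have hPz_eq : Pz = Real.sin ψ := by
    linear_combination Real.cos ψ * eqC + Real.sin ψ * eqD - Pz * hpyth
  have hPFz : ρ r z * Fz = Real.cos ψ := by
    linear_combination (-Real.sin ψ) * eqC + Real.cos ψ * eqD
      - (ρ r z * Fz) * hpyth
  -- derivative of ρ^(α-1) factor and the angular factors
  have hpow_r : HasDerivAt (fun r' => ρ r' z ^ (α - 1))
      (Pr * (α - 1) * ρ r z ^ (α - 1 - 1)) r := hPr.rpow_const (Or.inl hPne)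
  have hpow_z : HasDerivAt (fun z' => ρ r z' ^ (α - 1))
      (Pz * (α - 1) * ρ r z ^ (α - 1 - 1)) z := hPz.rpow_const (Or.inl hPne)
  have hsin_r : HasDerivAt (fun r' => Real.sin ((α - 1) * φ r' z - φ₀))
      (Real.cos ((α - 1) * φ r z - φ₀) * ((α - 1) * Fr)) r :=
    ((hFr.const_mul (α - 1)).sub_const φ₀).sin
  have hcos_z : HasDerivAt (fun z' => Real.cos ((α - 1) * φ r z' - φ₀))
      (-Real.sin ((α - 1) * φ r z - φ₀) * ((α - 1) * Fz)) z :=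
    ((hFz.const_mul (α - 1)).sub_const φ₀).cos
  -- radial-direction derivative of the scaled component r' * Sr
  set S := Real.sin ((α - 1) * φ r z - φ₀) with hSdef
  set C := Real.cos ((α - 1) * φ r z - φ₀) with hCdef
  set Dr : ℝ := -(α / a) * ((1 * r + r * 1) * (ρ r z ^ (α - 1) * S)
      + r * r * (Pr * (α - 1) * ρ r z ^ (α - 1 - 1) * S
        + ρ r z ^ (α - 1) * (C * ((α - 1) * Fr)))) with hDrdef
  have hgr : HasDerivAt
      (fun r' => r' * (-(r' / a) * α * ρ r' z ^ (α - 1)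
        * Real.sin ((α - 1) * φ r' z - φ₀))) Dr r := by
    have h0 : HasDerivAt (fun r' => -(α / a) * (r' * r'
        * (ρ r' z ^ (α - 1) * Real.sin ((α - 1) * φ r' z - φ₀)))) Dr r :=
      ((((hasDerivAt_id r).mul (hasDerivAt_id r)).mul (hpow_r.mul hsin_r)).const_mul
        (-(α / a)))
    exact h0.congr_of_eventuallyEq (Filter.Eventually.of_forall fun x => by ring)
  set Dz : ℝ := -(r * α / a) * (Pz * (α - 1) * ρ r z ^ (α - 1 - 1) * C
      + ρ r z ^ (α - 1) * (-S * ((α - 1) * Fz))) with hDzdef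
  have hgz : HasDerivAt
      (fun z' => -(r / a) * α * ρ r z' ^ (α - 1)
        * Real.cos ((α - 1) * φ r z' - φ₀)) Dz z := by
    have h0 : HasDerivAt (fun z' => -(r * α / a)
        * (ρ r z' ^ (α - 1) * Real.cos ((α - 1) * φ r z' - φ₀))) Dz z :=
      (hpow_z.mul hcos_z).const_mul (-(r * α / a))
    exact h0.congr_of_eventuallyEq (Filter.Eventually.of_forall fun x => by ring)
  -- convert to the complex derivatives in the goal
  have hder1 : deriv (fun r' : ℝ => ((r' : ℝ) : ℂ) * Sr r' z) r = (Dr : ℂ) := by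
    have hfun : (fun r' : ℝ => ((r' : ℝ) : ℂ) * Sr r' z)
        = fun r' => ((r' * (-(r' / a) * α * ρ r' z ^ (α - 1)
            * Real.sin ((α - 1) * φ r' z - φ₀)) : ℝ) : ℂ) := by
      funext r'
      rw [hSr]
      push_cast
      ring
    rw [hfun]
    exact hgr.ofReal_comp.deriv
  have hder2 : deriv (fun z' => Sz r z') z = (Dz : ℂ) := by
    have hfun : (fun z' : ℝ => Sz r z')
        = fun z' => ((-(r / a) * α * ρ r z' ^ (α - 1)
            * Real.cos ((α - 1) * φ r z' - φ₀) : ℝ) : ℂ) := by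
      funext z'
      rw [hSz]
    rw [hfun]
    exact hgz.ofReal_comp.deriv
  rw [hder1, hder2, hSθ, mul_zero, add_zero]
  -- reduce to a real identity
  have hstep : (1 / (r : ℂ)) * (Dr : ℂ) = ((1 / r * Dr : ℝ) : ℂ) := by push_cast; ring
  rw [hstep, ← Complex.ofReal_add]
  norm_cast
  -- the real identity
  have hpp : ρ r z ^ (α - 1 - 1) * ρ r z = ρ r z ^ (α - 1) := by
    rw [← Real.rpow_add_one hPne]
    norm_num
  rw [hDrdef, hDzdef, hPr_eq, hPz_eq]
  have hFr' : Fr = -Real.sin ψ / ρ r z := by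
    field_simp
    linarith [hPFr]
  have hFz' : Fz = Real.cos ψ / ρ r z := by
    field_simp
    linarith [hPFz]
  rw [hFr', hFz']
  field_simp
  linear_combination ((S * Real.cos ψ + C * Real.sin ψ) * r
    * (1 - α)) * hpp
end

section
/- Let S(r,z) be the magnetic principal singular part with cylindrical components S = −(r/a) α ρ^{α−1}(cos((α−1)φ − φ₀), 0, −sin((α−1)φ − φ₀)). Then for every integer k, div_k S = −(2α/a) ρ^{α−1} cos((α−1)φ − φ₀) and curl_k S = (α/a) ρ^{α−1}(ik sin((α−1)φ − φ₀), −sin((α−1)φ − φ₀), ik cos((α−1)φ − φ₀)). -/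
open Complex

/-- Let `S` be the magnetic principal singular part, with cylindrical components
`S = −(r/a) α ρ^(α−1)(cos((α−1)φ−φ₀), 0, −sin((α−1)φ−φ₀))`, in local polar
coordinates `(ρ,φ)` centered at the reentrant corner `(a,z₀)`, `a > 0`
(`r = a + ρ cos(φ+φ₀)`, `z = z₀ + ρ sin(φ+φ₀)` on an open set `U`).  Then for every
integer `k`, `div_k S = −(2α/a) ρ^(α−1) cos((α−1)φ−φ₀)` and
`curl_k S = (α/a) ρ^(α−1)(ik sin((α−1)φ−φ₀), −sin((α−1)φ−φ₀), ik cos((α−1)φ−φ₀))`. -/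
theorem divk_curlk_magnetic_singular_part
    (a z₀ φ₀ α : ℝ) (ha : 0 < a) (hα₁ : 1/2 < α) (hα₂ : α < 1)
    (U : Set (ℝ × ℝ)) (hU : IsOpen U)
    (ρ φ : ℝ → ℝ → ℝ)
    (hρ : ContDiffOn ℝ (⊤ : ℕ∞) (fun p : ℝ × ℝ => ρ p.1 p.2) U)
    (hφ : ContDiffOn ℝ (⊤ : ℕ∞) (fun p : ℝ × ℝ => φ p.1 p.2) U)
    (hρpos : ∀ p ∈ U, 0 < ρ p.1 p.2)
    (hcr : ∀ p ∈ U, p.1 = a + ρ p.1 p.2 * Real.cos (φ p.1 p.2 + φ₀))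
    (hcz : ∀ p ∈ U, p.2 = z₀ + ρ p.1 p.2 * Real.sin (φ p.1 p.2 + φ₀))
    (Sr Sθ Sz : ℝ → ℝ → ℂ)
    (hSr : ∀ r z, Sr r z =
      ((-(r / a) * α * ρ r z ^ (α - 1) * Real.cos ((α - 1) * φ r z - φ₀) : ℝ) : ℂ))
    (hSθ : ∀ r z, Sθ r z = 0)
    (hSz : ∀ r z, Sz r z =
      ((-(r / a) * α * ρ r z ^ (α - 1) * (-Real.sin ((α - 1) * φ r z - φ₀)) : ℝ) : ℂ))
    (k : ℤ) (r z : ℝ) (hmem : (r, z) ∈ U) (hr : 0 < r) :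
    -- div_k S
    ((1 / (r : ℂ)) * deriv (fun r' : ℝ => ((r' : ℝ) : ℂ) * Sr r' z) r
        + (Complex.I * (k : ℂ) / (r : ℂ)) * Sθ r z
        + deriv (fun z' => Sz r z') z
      = ((-(2 * α / a) * ρ r z ^ (α - 1) * Real.cos ((α - 1) * φ r z - φ₀) : ℝ) : ℂ)) ∧
    -- (curl_k S)_r
    (Complex.I * (k : ℂ) / (r : ℂ) * Sz r z - deriv (fun z' => Sθ r z') z
      = ((α / a * ρ r z ^ (α - 1) : ℝ) : ℂ) *
          (Complex.I * (k : ℂ) * ((Real.sin ((α - 1) * φ r z - φ₀) : ℝ) : ℂ))) ∧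
    -- (curl_k S)_θ
    (deriv (fun z' => Sr r z') z - deriv (fun r' => Sz r' z) r
      = ((α / a * ρ r z ^ (α - 1) * (-Real.sin ((α - 1) * φ r z - φ₀)) : ℝ) : ℂ)) ∧
    -- (curl_k S)_z
    ((1 / (r : ℂ)) * (deriv (fun r' : ℝ => ((r' : ℝ) : ℂ) * Sθ r' z) r
        - Complex.I * (k : ℂ) * Sr r z)
      = ((α / a * ρ r z ^ (α - 1) : ℝ) : ℂ) *
          (Complex.I * (k : ℂ) * ((Real.cos ((α - 1) * φ r z - φ₀) : ℝ) : ℂ))) := by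
  have hnhds : U ∈ nhds (r, z) := hU.mem_nhds hmem
  have hρ0 : 0 < ρ r z := hρpos _ hmem
  have hρ0' : ρ r z ≠ 0 := ne_of_gt hρ0
  have ha' : a ≠ 0 := ne_of_gt ha
  have hr' : r ≠ 0 := ne_of_gt hr
  have hρd : DifferentiableAt ℝ (fun p : ℝ × ℝ => ρ p.1 p.2) (r, z) :=
    (hρ.contDiffAt hnhds).differentiableAt (by simp)
  have hφd : DifferentiableAt ℝ (fun p : ℝ × ℝ => φ p.1 p.2) (r, z) :=
    (hφ.contDiffAt hnhds).differentiableAt (by simp)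
  -- partial derivatives
  have hline_r : HasDerivAt (fun r' : ℝ => ((r', z) : ℝ × ℝ)) ((1 : ℝ), (0 : ℝ)) r :=
    (hasDerivAt_id r).prodMk (hasDerivAt_const r z)
  have hline_z : HasDerivAt (fun z' : ℝ => ((r, z') : ℝ × ℝ)) ((0 : ℝ), (1 : ℝ)) z :=
    (hasDerivAt_const z r).prodMk (hasDerivAt_id z)
  set ρr := fderiv ℝ (fun p : ℝ × ℝ => ρ p.1 p.2) (r, z) (1, 0) with hρr_def
  set ρz := fderiv ℝ (fun p : ℝ × ℝ => ρ p.1 p.2) (r, z) (0, 1) with hρz_def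
  set φr := fderiv ℝ (fun p : ℝ × ℝ => φ p.1 p.2) (r, z) (1, 0) with hφr_def
  set φz := fderiv ℝ (fun p : ℝ × ℝ => φ p.1 p.2) (r, z) (0, 1) with hφz_def
  have hρr_d : HasDerivAt (fun r' => ρ r' z) ρr r :=
    by have h := hρd.hasFDerivAt.comp_hasDerivAt r hline_r; exact h
  have hρz_d : HasDerivAt (fun z' => ρ r z') ρz z :=
    hρd.hasFDerivAt.comp_hasDerivAt z hline_z
  have hφr_d : HasDerivAt (fun r' => φ r' z) φr r :=
    by have h := hφd.hasFDerivAt.comp_hasDerivAt r hline_r; exact h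
  have hφz_d : HasDerivAt (fun z' => φ r z') φz z :=
    hφd.hasFDerivAt.comp_hasDerivAt z hline_z
  have hUr : ∀ᶠ r' in nhds r, ((r', z) : ℝ × ℝ) ∈ U :=
    (continuous_id.prodMk continuous_const).continuousAt.preimage_mem_nhds hnhds
  have hUz : ∀ᶠ z' in nhds z, ((r, z') : ℝ × ℝ) ∈ U :=
    (continuous_const.prodMk continuous_id).continuousAt.preimage_mem_nhds hnhds
  -- differentiate the coordinate constraints
  have hc1a : HasDerivAt (fun r' => a + ρ r' z * Real.cos (φ r' z + φ₀)) 1 r := by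
    apply (hasDerivAt_id r).congr_of_eventuallyEq
    filter_upwards [hUr] with r' h
    exact (hcr (r', z) h).symm
  have hc1b : HasDerivAt (fun r' => a + ρ r' z * Real.cos (φ r' z + φ₀))
      (ρr * Real.cos (φ r z + φ₀) + ρ r z * (-Real.sin (φ r z + φ₀) * φr)) r :=
    (hρr_d.mul ((hφr_d.add_const φ₀).cos)).const_add a
  have e1 := hc1a.unique hc1b
  have hc2a : HasDerivAt (fun r' => z₀ + ρ r' z * Real.sin (φ r' z + φ₀)) 0 r := by
    apply (hasDerivAt_const r z).congr_of_eventuallyEq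
    filter_upwards [hUr] with r' h
    exact (hcz (r', z) h).symm
  have hc2b : HasDerivAt (fun r' => z₀ + ρ r' z * Real.sin (φ r' z + φ₀))
      (ρr * Real.sin (φ r z + φ₀) + ρ r z * (Real.cos (φ r z + φ₀) * φr)) r :=
    (hρr_d.mul ((hφr_d.add_const φ₀).sin)).const_add z₀
  have e2 := hc2a.unique hc2b
  have hc3a : HasDerivAt (fun z' => a + ρ r z' * Real.cos (φ r z' + φ₀)) 0 z := by
    apply (hasDerivAt_const z r).congr_of_eventuallyEq
    filter_upwards [hUz] with z' h
    exact (hcr (r, z') h).symm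
  have hc3b : HasDerivAt (fun z' => a + ρ r z' * Real.cos (φ r z' + φ₀))
      (ρz * Real.cos (φ r z + φ₀) + ρ r z * (-Real.sin (φ r z + φ₀) * φz)) z :=
    (hρz_d.mul ((hφz_d.add_const φ₀).cos)).const_add a
  have e3 := hc3a.unique hc3b
  have hc4a : HasDerivAt (fun z' => z₀ + ρ r z' * Real.sin (φ r z' + φ₀)) 1 z := by
    apply (hasDerivAt_id z).congr_of_eventuallyEq
    filter_upwards [hUz] with z' h
    exact (hcz (r, z') h).symm
  have hc4b : HasDerivAt (fun z' => z₀ + ρ r z' * Real.sin (φ r z' + φ₀))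
      (ρz * Real.sin (φ r z + φ₀) + ρ r z * (Real.cos (φ r z + φ₀) * φz)) z :=
    (hρz_d.mul ((hφz_d.add_const φ₀).sin)).const_add z₀
  have e4 := hc4a.unique hc4b
  have pyth := Real.sin_sq_add_cos_sq (φ r z + φ₀)
  -- solve for the partial derivatives
  have hρr_eq : ρr = Real.cos (φ r z + φ₀) := by
    linear_combination (-(Real.cos (φ r z + φ₀))) * e1 + (-(Real.sin (φ r z + φ₀))) * e2
      - ρr * pyth
  have hρz_eq : ρz = Real.sin (φ r z + φ₀) := by
    linear_combination (-(Real.cos (φ r z + φ₀))) * e3 + (-(Real.sin (φ r z + φ₀))) * e4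
      - ρz * pyth
  have hφr_eq : φr = -Real.sin (φ r z + φ₀) / ρ r z := by
    rw [eq_div_iff hρ0']
    linear_combination Real.sin (φ r z + φ₀) * e1 + (-(Real.cos (φ r z + φ₀))) * e2
      - (φr * ρ r z) * pyth
  have hφz_eq : φz = Real.cos (φ r z + φ₀) / ρ r z := by
    rw [eq_div_iff hρ0']
    linear_combination Real.sin (φ r z + φ₀) * e3 + (-(Real.cos (φ r z + φ₀))) * e4
      - (φz * ρ r z) * pyth
  -- derivatives of the building blocks
  have hP_r : HasDerivAt (fun r' => ρ r' z ^ (α - 1))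
      (ρr * (α - 1) * ρ r z ^ (α - 1 - 1)) r :=
    hρr_d.rpow_const (Or.inl hρ0')
  have hP_z : HasDerivAt (fun z' => ρ r z' ^ (α - 1))
      (ρz * (α - 1) * ρ r z ^ (α - 1 - 1)) z :=
    hρz_d.rpow_const (Or.inl hρ0')
  have hC_r : HasDerivAt (fun r' => Real.cos ((α - 1) * φ r' z - φ₀))
      (-Real.sin ((α - 1) * φ r z - φ₀) * ((α - 1) * φr)) r :=
    ((hφr_d.const_mul (α - 1)).sub_const φ₀).cos
  have hC_z : HasDerivAt (fun z' => Real.cos ((α - 1) * φ r z' - φ₀))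
      (-Real.sin ((α - 1) * φ r z - φ₀) * ((α - 1) * φz)) z :=
    ((hφz_d.const_mul (α - 1)).sub_const φ₀).cos
  have hS_r : HasDerivAt (fun r' => Real.sin ((α - 1) * φ r' z - φ₀))
      (Real.cos ((α - 1) * φ r z - φ₀) * ((α - 1) * φr)) r :=
    ((hφr_d.const_mul (α - 1)).sub_const φ₀).sin
  have hS_z : HasDerivAt (fun z' => Real.sin ((α - 1) * φ r z' - φ₀))
      (Real.cos ((α - 1) * φ r z - φ₀) * ((α - 1) * φz)) z :=
    ((hφz_d.const_mul (α - 1)).sub_const φ₀).sin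
  have hu_r : HasDerivAt (fun r' : ℝ => -(r' / a) * α) (-(1 / a) * α) r :=
    ((hasDerivAt_id r).div_const a).neg.mul_const α
  -- rpow splitting
  have hsplit : ρ r z ^ (α - 1) = ρ r z ^ (α - 1 - 1) * ρ r z := by
    have h := Real.rpow_add_one hρ0' (α - 1 - 1)
    rw [show α - 1 - 1 + 1 = α - 1 by ring] at h
    exact h
  -- the four nontrivial derivatives, complexified
  have hG1 := ((hasDerivAt_id r).fun_mul ((hu_r.fun_mul hP_r).fun_mul hC_r)).ofReal_comp
  have hD1 := hG1.congr_of_eventuallyEq (f₁ := fun r' : ℝ => ((r' : ℝ) : ℂ) * Sr r' z)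
    (Filter.Eventually.of_forall fun r' => by simp only [hSr, id_eq]; try (push_cast; ring))
  have hG2 := (((hasDerivAt_const z (-(r / a) * α)).fun_mul hP_z).fun_mul hS_z.fun_neg).ofReal_comp
  have hD2 := hG2.congr_of_eventuallyEq (f₁ := fun z' : ℝ => Sz r z')
    (Filter.Eventually.of_forall fun z' => by simp only [hSz, id_eq]; try (push_cast; ring))
  have hG3 := (((hasDerivAt_const z (-(r / a) * α)).fun_mul hP_z).fun_mul hC_z).ofReal_comp
  have hD3 := hG3.congr_of_eventuallyEq (f₁ := fun z' : ℝ => Sr r z')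
    (Filter.Eventually.of_forall fun z' => by simp only [hSr, id_eq]; try (push_cast; ring))
  have hG4 := ((hu_r.fun_mul hP_r).fun_mul hS_r.fun_neg).ofReal_comp
  have hD4 := hG4.congr_of_eventuallyEq (f₁ := fun r' : ℝ => Sz r' z)
    (Filter.Eventually.of_forall fun r' => by simp only [hSz, id_eq]; try (push_cast; ring))
  -- trivial derivatives
  have hDθz : deriv (fun z' : ℝ => Sθ r z') z = 0 := by
    have h : (fun z' : ℝ => Sθ r z') = fun _ => (0 : ℂ) := funext fun z' => hSθ r z'
    rw [h, deriv_const]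
  have hDθr : deriv (fun r' : ℝ => ((r' : ℝ) : ℂ) * Sθ r' z) r = 0 := by
    have h : (fun r' : ℝ => ((r' : ℝ) : ℂ) * Sθ r' z) = fun _ => (0 : ℂ) :=
      funext fun r' => by rw [hSθ, mul_zero]
    rw [h, deriv_const]
  have hrC : (r : ℂ) ≠ 0 := Complex.ofReal_ne_zero.mpr hr'
  have haC : (a : ℂ) ≠ 0 := Complex.ofReal_ne_zero.mpr ha'
  have hρC : ((ρ r z : ℝ) : ℂ) ≠ 0 := Complex.ofReal_ne_zero.mpr hρ0'
  refine ⟨?_, ?_, ?_, ?_⟩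
  · -- div
    rw [hD1.deriv, hD2.deriv, hSθ, mul_zero, add_zero]
    rw [show (1 / (r : ℂ)) = ((1 / r : ℝ) : ℂ) by push_cast; ring]
    rw [← Complex.ofReal_mul, ← Complex.ofReal_add, Complex.ofReal_inj]
    try simp only [id_eq]
    rw [hρr_eq, hρz_eq, hφr_eq, hφz_eq, hsplit]
    field_simp
    ring
  · -- curl_r
    rw [hDθz, hSz, sub_zero]
    rw [show (-(r / a) * α * ρ r z ^ (α - 1) * (-Real.sin ((α - 1) * φ r z - φ₀)) : ℝ)
        = r * (α / a * ρ r z ^ (α - 1) * Real.sin ((α - 1) * φ r z - φ₀)) by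
      ring]
    rw [Complex.ofReal_mul, Complex.ofReal_mul]
    field_simp [hrC]
  · -- curl_θ
    rw [hD3.deriv, hD4.deriv]
    rw [← Complex.ofReal_sub, Complex.ofReal_inj]
    try simp only [id_eq]
    rw [hρr_eq, hρz_eq, hφr_eq, hφz_eq, hsplit]
    field_simp
    ring
  · -- curl_z
    rw [hDθr, hSr]
    rw [show (-(r / a) * α * ρ r z ^ (α - 1) * Real.cos ((α - 1) * φ r z - φ₀) : ℝ)
        = -(r * (α / a * ρ r z ^ (α - 1) * Real.cos ((α - 1) * φ r z - φ₀))) by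
      ring]
    rw [Complex.ofReal_neg, Complex.ofReal_mul, Complex.ofReal_mul]
    field_simp [hrC]
    ring
end

section
/- For all integers k and complex vector fields u, v (smooth, compactly supported away from r = 0 in the meridian domain), the identity a_k(u,v) = a_2(u,v) + (k² − 4)(u/r, v/r) + i(k − 2) C(u,v) holds, where (u/r, v/r) = ∫∫_ω (u·v̄)/r² · r dω and C(u,v) = ∫∫_ω 2(u_θ v̄_r − u_r v̄_θ) r^{−1} dω. -/
open Complex MeasureTheory

/-- Weighted `L²` inner product on the meridian domain `ω`: `(f,g) = ∫∫_ω f ḡ r dr dz`. -/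
noncomputable def wip (ω : Set (ℝ × ℝ)) (f g : ℝ → ℝ → ℂ) : ℂ :=
  ∫ p in ω, f p.1 p.2 * (starRingEnd ℂ) (g p.1 p.2) * ((p.1 : ℝ) : ℂ)

noncomputable def curlkR (k : ℤ) (uθ uz : ℝ → ℝ → ℂ) : ℝ → ℝ → ℂ :=
  fun r z => Complex.I * (k : ℂ) / (r : ℂ) * uz r z - deriv (fun z' => uθ r z') z

noncomputable def curlkTheta (ur uz : ℝ → ℝ → ℂ) : ℝ → ℝ → ℂ :=
  fun r z => deriv (fun z' => ur r z') z - deriv (fun r' => uz r' z) r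

noncomputable def curlkZ (k : ℤ) (ur uθ : ℝ → ℝ → ℂ) : ℝ → ℝ → ℂ :=
  fun r z => (1 / (r : ℂ)) * (deriv (fun r' : ℝ => ((r' : ℝ) : ℂ) * uθ r' z) r
    - Complex.I * (k : ℂ) * ur r z)

noncomputable def divk (k : ℤ) (ur uθ uz : ℝ → ℝ → ℂ) : ℝ → ℝ → ℂ :=
  fun r z => (1 / (r : ℂ)) * deriv (fun r' : ℝ => ((r' : ℝ) : ℂ) * ur r' z) r
    + Complex.I * (k : ℂ) / (r : ℂ) * uθ r z + deriv (fun z' => uz r z') z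

/-- `a_k(u,v) = (curl_k u, curl_k v) + (div_k u, div_k v)`. -/
noncomputable def ak (ω : Set (ℝ × ℝ)) (k : ℤ) (ur uθ uz vr vθ vz : ℝ → ℝ → ℂ) : ℂ :=
  wip ω (curlkR k uθ uz) (curlkR k vθ vz) + wip ω (curlkTheta ur uz) (curlkTheta vr vz)
    + wip ω (curlkZ k ur uθ) (curlkZ k vr vθ)
    + wip ω (divk k ur uθ uz) (divk k vr vθ vz)

/-- `C(u,v) = ∫∫_ω 2(u_θ v̄_r − u_r v̄_θ) r⁻¹ dω`. -/
noncomputable def Cform (ω : Set (ℝ × ℝ)) (ur uθ vr vθ : ℝ → ℝ → ℂ) : ℂ :=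
  ∫ p in ω, 2 * (uθ p.1 p.2 * (starRingEnd ℂ) (vr p.1 p.2)
    - ur p.1 p.2 * (starRingEnd ℂ) (vθ p.1 p.2)) / ((p.1 : ℝ) : ℂ)


open Complex MeasureTheory

namespace AkAux

open Set Filter Topology

noncomputable def d1 (F : ℝ × ℝ → ℂ) (p : ℝ × ℝ) : ℂ := fderiv ℝ F p (1, 0)
noncomputable def d2 (F : ℝ × ℝ → ℂ) (p : ℝ × ℝ) : ℂ := fderiv ℝ F p (0, 1)

theorem hasDerivAt_slice1 {F : ℝ × ℝ → ℂ} (hF : Differentiable ℝ F) (r z : ℝ) :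
    HasDerivAt (fun r' => F (r', z)) (d1 F (r, z)) r :=
  (hF (r, z)).hasFDerivAt.comp_hasDerivAt r ((hasDerivAt_id r).prodMk (hasDerivAt_const r z))

theorem hasDerivAt_slice2 {F : ℝ × ℝ → ℂ} (hF : Differentiable ℝ F) (r z : ℝ) :
    HasDerivAt (fun z' => F (r, z')) (d2 F (r, z)) z :=
  (hF (r, z)).hasFDerivAt.comp_hasDerivAt z ((hasDerivAt_const z r).prodMk (hasDerivAt_id z))

theorem cont_d1 {F : ℝ × ℝ → ℂ} (hF : ContDiff ℝ (⊤ : ℕ∞) F) : Continuous (d1 F) :=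
  (hF.continuous_fderiv (by simp)).clm_apply continuous_const

theorem cont_d2 {F : ℝ × ℝ → ℂ} (hF : ContDiff ℝ (⊤ : ℕ∞) F) : Continuous (d2 F) :=
  (hF.continuous_fderiv (by simp)).clm_apply continuous_const

theorem d1_eq_zero {F : ℝ × ℝ → ℂ} {p : ℝ × ℝ} (hp : p ∉ tsupport F) : d1 F p = 0 := by
  have h : fderiv ℝ F p = 0 := by
    by_contra h
    exact hp (support_fderiv_subset ℝ (by simpa [Function.mem_support] using h))
  simp [d1, h]

theorem d2_eq_zero {F : ℝ × ℝ → ℂ} {p : ℝ × ℝ} (hp : p ∉ tsupport F) : d2 F p = 0 := by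
  have h : fderiv ℝ F p = 0 := by
    by_contra h
    exact hp (support_fderiv_subset ℝ (by simpa [Function.mem_support] using h))
  simp [d2, h]

theorem cont_div {X : ℝ × ℝ → ℂ} (hX : Continuous X)
    (hs : tsupport X ⊆ {p : ℝ × ℝ | 0 < p.1}) :
    Continuous fun p : ℝ × ℝ => X p / ((p.1 : ℝ) : ℂ) := by
  rw [continuous_iff_continuousAt]
  intro p
  rcases eq_or_ne p.1 0 with h0 | h0
  · have hp : p ∉ tsupport X := fun h => by simpa [h0] using hs h
    have hev : ∀ᶠ q in 𝓝 p, X q = 0 := notMem_tsupport_iff_eventuallyEq.mp hp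
    have hev2 : (fun q : ℝ × ℝ => X q / ((q.1 : ℝ) : ℂ)) =ᶠ[𝓝 p] fun _ => (0 : ℂ) :=
      hev.mono fun q hq => by simp [hq]
    exact ContinuousAt.congr continuousAt_const hev2.symm
  · exact (hX.continuousAt).div
      ((Complex.continuous_ofReal.comp continuous_fst).continuousAt)
      (by simpa using h0)

theorem integral_deriv_eq_zero' {f : ℝ → ℂ} (hf : ContDiff ℝ (⊤ : ℕ∞) f) (hc : HasCompactSupport f) :
    ∫ x : ℝ, deriv f x = 0 := by
  have hint : Integrable (deriv f) :=
    (hf.continuous_deriv (by simp)).integrable_of_hasCompactSupport hc.deriv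
  rw [← intervalIntegral.integral_Iic_add_Ioi (b := (0 : ℝ)) hint.integrableOn hint.integrableOn,
    hc.integral_Iic_deriv_eq (hf.of_le (by simp)) 0, hc.integral_Ioi_deriv_eq (hf.of_le (by simp)) 0]
  ring

theorem hcs_slice1 {F : ℝ × ℝ → ℂ} (hc : HasCompactSupport F) (z : ℝ) :
    HasCompactSupport fun r : ℝ => F (r, z) := by
  apply HasCompactSupport.intro (hc.image continuous_fst)
  intro r hr
  by_contra h
  exact hr ⟨(r, z), subset_tsupport _ h, rfl⟩

theorem hcs_slice2 {F : ℝ × ℝ → ℂ} (hc : HasCompactSupport F) (x : ℝ) :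
    HasCompactSupport fun z : ℝ => F (x, z) := by
  apply HasCompactSupport.intro (hc.image continuous_snd)
  intro z hz
  by_contra h
  exact hz ⟨(x, z), subset_tsupport _ h, rfl⟩

theorem contDiff_slice1 {F : ℝ × ℝ → ℂ} (hF : ContDiff ℝ (⊤ : ℕ∞) F) (z : ℝ) :
    ContDiff ℝ (⊤ : ℕ∞) fun r : ℝ => F (r, z) :=
  hF.comp (contDiff_id.prodMk contDiff_const)

theorem contDiff_slice2 {F : ℝ × ℝ → ℂ} (hF : ContDiff ℝ (⊤ : ℕ∞) F) (x : ℝ) :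
    ContDiff ℝ (⊤ : ℕ∞) fun z : ℝ => F (x, z) :=
  hF.comp (contDiff_const.prodMk contDiff_id)

theorem hcs_d1 {F : ℝ × ℝ → ℂ} (hc : HasCompactSupport F) : HasCompactSupport (d1 F) :=
  HasCompactSupport.intro hc fun _ hp => d1_eq_zero hp

theorem hcs_d2 {F : ℝ × ℝ → ℂ} (hc : HasCompactSupport F) : HasCompactSupport (d2 F) :=
  HasCompactSupport.intro hc fun _ hp => d2_eq_zero hp

theorem integral_d2_eq_zero {F : ℝ × ℝ → ℂ} (hF : ContDiff ℝ (⊤ : ℕ∞) F)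
    (hc : HasCompactSupport F) : ∫ p : ℝ × ℝ, d2 F p = 0 := by
  have hdiff := hF.differentiable (by simp)
  have hint : Integrable (d2 F) :=
    (cont_d2 hF).integrable_of_hasCompactSupport (hcs_d2 hc)
  have hint' : Integrable (d2 F) ((volume : Measure ℝ).prod volume) := by
    rwa [← Measure.volume_eq_prod]
  rw [show (volume : Measure (ℝ × ℝ)) = (volume : Measure ℝ).prod volume from
    Measure.volume_eq_prod ℝ ℝ, integral_prod _ hint']
  have h0 : ∀ x : ℝ, ∫ y : ℝ, d2 F (x, y) = 0 := by
    intro x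
    have hfun : (fun y : ℝ => d2 F (x, y)) = fun y => deriv (fun z => F (x, z)) y :=
      funext fun y => ((hasDerivAt_slice2 hdiff x y).deriv).symm
    rw [hfun]
    exact integral_deriv_eq_zero' (contDiff_slice2 hF x) (hcs_slice2 hc x)
  simp [h0]

theorem integral_d1_eq_zero {F : ℝ × ℝ → ℂ} (hF : ContDiff ℝ (⊤ : ℕ∞) F)
    (hc : HasCompactSupport F) : ∫ p : ℝ × ℝ, d1 F p = 0 := by
  have hdiff := hF.differentiable (by simp)
  have hint : Integrable (d1 F) :=
    (cont_d1 hF).integrable_of_hasCompactSupport (hcs_d1 hc)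
  have hint' : Integrable (d1 F) ((volume : Measure ℝ).prod volume) := by
    rwa [← Measure.volume_eq_prod]
  rw [show (volume : Measure (ℝ × ℝ)) = (volume : Measure ℝ).prod volume from
    Measure.volume_eq_prod ℝ ℝ, integral_prod_symm _ hint']
  have h0 : ∀ y : ℝ, ∫ x : ℝ, d1 F (x, y) = 0 := by
    intro y
    have hfun : (fun x : ℝ => d1 F (x, y)) = fun x => deriv (fun r => F (r, y)) x :=
      funext fun x => ((hasDerivAt_slice1 hdiff x y).deriv).symm
    rw [hfun]
    exact integral_deriv_eq_zero' (contDiff_slice1 hF y) (hcs_slice1 hc y)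
  simp [h0]

theorem ofReal_mul_deriv (g : ℝ → ℝ → ℂ)
    (hg : ContDiff ℝ (⊤ : ℕ∞) fun p : ℝ × ℝ => g p.1 p.2) (r z : ℝ) :
    deriv (fun r' : ℝ => ((r' : ℝ) : ℂ) * g r' z) r
      = g r z + (r : ℂ) * d1 (fun p : ℝ × ℝ => g p.1 p.2) (r, z) := by
  have h1 : HasDerivAt (fun r' : ℝ => ((r' : ℝ) : ℂ)) 1 r := by
    simpa using (hasDerivAt_id r).ofReal_comp
  have h2 := h1.mul (hasDerivAt_slice1 (hg.differentiable (by simp)) r z)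
  have h3 : HasDerivAt (fun r' : ℝ => ((r' : ℝ) : ℂ) * g r' z) _ r := h2
  simpa using h3.deriv

end AkAux
open AkAux

noncomputable def gR (uθ uz vθ vz : ℝ → ℝ → ℂ) (m : ℤ) (p : ℝ × ℝ) : ℂ :=
  (Complex.I * (m : ℂ) * (uz p.1 p.2 / ((p.1 : ℝ) : ℂ)) - d2 (fun q : ℝ × ℝ => uθ q.1 q.2) p)
    * (starRingEnd ℂ) (Complex.I * (m : ℂ) * (vz p.1 p.2 / ((p.1 : ℝ) : ℂ))
        - d2 (fun q : ℝ × ℝ => vθ q.1 q.2) p)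
    * ((p.1 : ℝ) : ℂ)

noncomputable def gT (ur uz vr vz : ℝ → ℝ → ℂ) (p : ℝ × ℝ) : ℂ :=
  (d2 (fun q : ℝ × ℝ => ur q.1 q.2) p - d1 (fun q : ℝ × ℝ => uz q.1 q.2) p)
    * (starRingEnd ℂ) (d2 (fun q : ℝ × ℝ => vr q.1 q.2) p - d1 (fun q : ℝ × ℝ => vz q.1 q.2) p)
    * ((p.1 : ℝ) : ℂ)

noncomputable def gZ (ur uθ vr vθ : ℝ → ℝ → ℂ) (m : ℤ) (p : ℝ × ℝ) : ℂ :=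
  ((uθ p.1 p.2 + ((p.1 : ℝ) : ℂ) * d1 (fun q : ℝ × ℝ => uθ q.1 q.2) p
      - Complex.I * (m : ℂ) * ur p.1 p.2) / ((p.1 : ℝ) : ℂ))
    * (starRingEnd ℂ) ((vθ p.1 p.2 + ((p.1 : ℝ) : ℂ) * d1 (fun q : ℝ × ℝ => vθ q.1 q.2) p
      - Complex.I * (m : ℂ) * vr p.1 p.2) / ((p.1 : ℝ) : ℂ))
    * ((p.1 : ℝ) : ℂ)

noncomputable def gD (ur uθ uz vr vθ vz : ℝ → ℝ → ℂ) (m : ℤ) (p : ℝ × ℝ) : ℂ :=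
  ((ur p.1 p.2 + ((p.1 : ℝ) : ℂ) * d1 (fun q : ℝ × ℝ => ur q.1 q.2) p) / ((p.1 : ℝ) : ℂ)
      + Complex.I * (m : ℂ) * (uθ p.1 p.2 / ((p.1 : ℝ) : ℂ))
      + d2 (fun q : ℝ × ℝ => uz q.1 q.2) p)
    * (starRingEnd ℂ) ((vr p.1 p.2 + ((p.1 : ℝ) : ℂ) * d1 (fun q : ℝ × ℝ => vr q.1 q.2) p)
        / ((p.1 : ℝ) : ℂ)
      + Complex.I * (m : ℂ) * (vθ p.1 p.2 / ((p.1 : ℝ) : ℂ))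
      + d2 (fun q : ℝ × ℝ => vz q.1 q.2) p)
    * ((p.1 : ℝ) : ℂ)

noncomputable def gM (ur uθ uz vr vθ vz : ℝ → ℝ → ℂ) (p : ℝ × ℝ) : ℂ :=
  (ur p.1 p.2 / ((p.1 : ℝ) : ℂ)) * (starRingEnd ℂ) (vr p.1 p.2 / ((p.1 : ℝ) : ℂ))
      * ((p.1 : ℝ) : ℂ)
    + (uθ p.1 p.2 / ((p.1 : ℝ) : ℂ)) * (starRingEnd ℂ) (vθ p.1 p.2 / ((p.1 : ℝ) : ℂ))
      * ((p.1 : ℝ) : ℂ)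
    + (uz p.1 p.2 / ((p.1 : ℝ) : ℂ)) * (starRingEnd ℂ) (vz p.1 p.2 / ((p.1 : ℝ) : ℂ))
      * ((p.1 : ℝ) : ℂ)

noncomputable def gC (ur uθ vr vθ : ℝ → ℝ → ℂ) (p : ℝ × ℝ) : ℂ :=
  2 * (uθ p.1 p.2 * (starRingEnd ℂ) (vr p.1 p.2)
    - ur p.1 p.2 * (starRingEnd ℂ) (vθ p.1 p.2)) / ((p.1 : ℝ) : ℂ)

noncomputable def gG (ur uθ uz vr vθ vz : ℝ → ℝ → ℂ) (p : ℝ × ℝ) : ℂ :=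
  (d1 (fun q : ℝ × ℝ => uθ q.1 q.2) p * (starRingEnd ℂ) (vr p.1 p.2)
      + uθ p.1 p.2 * (starRingEnd ℂ) (d1 (fun q : ℝ × ℝ => vr q.1 q.2) p)
      - d1 (fun q : ℝ × ℝ => ur q.1 q.2) p * (starRingEnd ℂ) (vθ p.1 p.2)
      - ur p.1 p.2 * (starRingEnd ℂ) (d1 (fun q : ℝ × ℝ => vθ q.1 q.2) p))
  + (d2 (fun q : ℝ × ℝ => uθ q.1 q.2) p * (starRingEnd ℂ) (vz p.1 p.2)
      + uθ p.1 p.2 * (starRingEnd ℂ) (d2 (fun q : ℝ × ℝ => vz q.1 q.2) p)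
      - d2 (fun q : ℝ × ℝ => uz q.1 q.2) p * (starRingEnd ℂ) (vθ p.1 p.2)
      - uz p.1 p.2 * (starRingEnd ℂ) (d2 (fun q : ℝ × ℝ => vθ q.1 q.2) p))
namespace AkAux

theorem curlkR_pt' (m : ℤ) (f g : ℝ → ℝ → ℂ)
    (hf : ContDiff ℝ (⊤ : ℕ∞) fun p : ℝ × ℝ => f p.1 p.2) (r z : ℝ) :
    curlkR m f g r z =
      Complex.I * (m : ℂ) * (g r z / (r : ℂ)) - d2 (fun p : ℝ × ℝ => f p.1 p.2) (r, z) := by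
  rw [curlkR, show deriv (fun z' => f r z') z = d2 (fun p : ℝ × ℝ => f p.1 p.2) (r, z) from
    (hasDerivAt_slice2 (hf.differentiable (by simp)) r z).deriv]
  ring

theorem curlkTheta_pt (f g : ℝ → ℝ → ℂ)
    (hf : ContDiff ℝ (⊤ : ℕ∞) fun p : ℝ × ℝ => f p.1 p.2)
    (hg : ContDiff ℝ (⊤ : ℕ∞) fun p : ℝ × ℝ => g p.1 p.2) (r z : ℝ) :
    curlkTheta f g r z =
      d2 (fun p : ℝ × ℝ => f p.1 p.2) (r, z) - d1 (fun p : ℝ × ℝ => g p.1 p.2) (r, z) := by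
  rw [curlkTheta, show deriv (fun z' => f r z') z = d2 (fun p : ℝ × ℝ => f p.1 p.2) (r, z) from
      (hasDerivAt_slice2 (hf.differentiable (by simp)) r z).deriv,
    show deriv (fun r' => g r' z) r = d1 (fun p : ℝ × ℝ => g p.1 p.2) (r, z) from
      (hasDerivAt_slice1 (hg.differentiable (by simp)) r z).deriv]

theorem curlkZ_pt (m : ℤ) (f g : ℝ → ℝ → ℂ)
    (hg : ContDiff ℝ (⊤ : ℕ∞) fun p : ℝ × ℝ => g p.1 p.2) (r z : ℝ) :
    curlkZ m f g r z =
      (g r z + (r : ℂ) * d1 (fun p : ℝ × ℝ => g p.1 p.2) (r, z)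
        - Complex.I * (m : ℂ) * f r z) / (r : ℂ) := by
  rw [curlkZ, ofReal_mul_deriv g hg r z]
  ring

theorem divk_pt (m : ℤ) (f g h : ℝ → ℝ → ℂ)
    (hf : ContDiff ℝ (⊤ : ℕ∞) fun p : ℝ × ℝ => f p.1 p.2)
    (hh : ContDiff ℝ (⊤ : ℕ∞) fun p : ℝ × ℝ => h p.1 p.2) (r z : ℝ) :
    divk m f g h r z =
      (f r z + (r : ℂ) * d1 (fun p : ℝ × ℝ => f p.1 p.2) (r, z)) / (r : ℂ)
        + Complex.I * (m : ℂ) * (g r z / (r : ℂ))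
        + d2 (fun p : ℝ × ℝ => h p.1 p.2) (r, z) := by
  rw [divk, ofReal_mul_deriv f hf r z,
    show deriv (fun z' => h r z') z = d2 (fun p : ℝ × ℝ => h p.1 p.2) (r, z) from
      (hasDerivAt_slice2 (hh.differentiable (by simp)) r z).deriv]
  ring

end AkAux

section WipLemmas

open AkAux Filter

variable (ω : Set (ℝ × ℝ))

theorem wip_curlkR (m : ℤ) (uθ uz vθ vz : ℝ → ℝ → ℂ)
    (h1 : ContDiff ℝ (⊤ : ℕ∞) fun p : ℝ × ℝ => uθ p.1 p.2)
    (h2 : ContDiff ℝ (⊤ : ℕ∞) fun p : ℝ × ℝ => vθ p.1 p.2) :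
    wip ω (curlkR m uθ uz) (curlkR m vθ vz) = ∫ p in ω, gR uθ uz vθ vz m p := by
  rw [wip]
  refine integral_congr_ae (MeasureTheory.ae_of_all _ fun p => ?_)
  simp only [curlkR_pt' m uθ uz h1, curlkR_pt' m vθ vz h2, gR]

theorem wip_curlkTheta (ur uz vr vz : ℝ → ℝ → ℂ)
    (h1 : ContDiff ℝ (⊤ : ℕ∞) fun p : ℝ × ℝ => ur p.1 p.2)
    (h2 : ContDiff ℝ (⊤ : ℕ∞) fun p : ℝ × ℝ => uz p.1 p.2)
    (h3 : ContDiff ℝ (⊤ : ℕ∞) fun p : ℝ × ℝ => vr p.1 p.2)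
    (h4 : ContDiff ℝ (⊤ : ℕ∞) fun p : ℝ × ℝ => vz p.1 p.2) :
    wip ω (curlkTheta ur uz) (curlkTheta vr vz) = ∫ p in ω, gT ur uz vr vz p := by
  rw [wip]
  refine integral_congr_ae (MeasureTheory.ae_of_all _ fun p => ?_)
  simp only [curlkTheta_pt ur uz h1 h2, curlkTheta_pt vr vz h3 h4, gT]

theorem wip_curlkZ (m : ℤ) (ur uθ vr vθ : ℝ → ℝ → ℂ)
    (h1 : ContDiff ℝ (⊤ : ℕ∞) fun p : ℝ × ℝ => uθ p.1 p.2)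
    (h2 : ContDiff ℝ (⊤ : ℕ∞) fun p : ℝ × ℝ => vθ p.1 p.2) :
    wip ω (curlkZ m ur uθ) (curlkZ m vr vθ) = ∫ p in ω, gZ ur uθ vr vθ m p := by
  rw [wip]
  refine integral_congr_ae (MeasureTheory.ae_of_all _ fun p => ?_)
  simp only [curlkZ_pt m ur uθ h1, curlkZ_pt m vr vθ h2, gZ]

theorem wip_divk (m : ℤ) (ur uθ uz vr vθ vz : ℝ → ℝ → ℂ)
    (h1 : ContDiff ℝ (⊤ : ℕ∞) fun p : ℝ × ℝ => ur p.1 p.2)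
    (h2 : ContDiff ℝ (⊤ : ℕ∞) fun p : ℝ × ℝ => uz p.1 p.2)
    (h3 : ContDiff ℝ (⊤ : ℕ∞) fun p : ℝ × ℝ => vr p.1 p.2)
    (h4 : ContDiff ℝ (⊤ : ℕ∞) fun p : ℝ × ℝ => vz p.1 p.2) :
    wip ω (divk m ur uθ uz) (divk m vr vθ vz) = ∫ p in ω, gD ur uθ uz vr vθ vz m p := by
  rw [wip]
  refine integral_congr_ae (MeasureTheory.ae_of_all _ fun p => ?_)
  simp only [divk_pt m ur uθ uz h1 h2, divk_pt m vr vθ vz h3 h4, gD]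

end WipLemmas
section Pointwise

open AkAux Complex

theorem pointwise_key (ur uθ uz vr vθ vz : ℝ → ℝ → ℂ)
    (hs1 : tsupport (fun q : ℝ × ℝ => ur q.1 q.2) ⊆ {q : ℝ × ℝ | 0 < q.1})
    (hs2 : tsupport (fun q : ℝ × ℝ => uθ q.1 q.2) ⊆ {q : ℝ × ℝ | 0 < q.1})
    (hs3 : tsupport (fun q : ℝ × ℝ => uz q.1 q.2) ⊆ {q : ℝ × ℝ | 0 < q.1})
    (hs4 : tsupport (fun q : ℝ × ℝ => vr q.1 q.2) ⊆ {q : ℝ × ℝ | 0 < q.1})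
    (hs5 : tsupport (fun q : ℝ × ℝ => vθ q.1 q.2) ⊆ {q : ℝ × ℝ | 0 < q.1})
    (hs6 : tsupport (fun q : ℝ × ℝ => vz q.1 q.2) ⊆ {q : ℝ × ℝ | 0 < q.1})
    (k : ℤ) (p : ℝ × ℝ) :
    gR uθ uz vθ vz k p + gT ur uz vr vz p + gZ ur uθ vr vθ k p
        + gD ur uθ uz vr vθ vz k p
      = gR uθ uz vθ vz 2 p + gT ur uz vr vz p + gZ ur uθ vr vθ 2 p
        + gD ur uθ uz vr vθ vz 2 p
        + ((k : ℂ) ^ 2 - 4) * gM ur uθ uz vr vθ vz p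
        + Complex.I * ((k : ℂ) - 2) * gC ur uθ vr vθ p
        + Complex.I * ((k : ℂ) - 2) * gG ur uθ uz vr vθ vz p := by
  rcases eq_or_ne p.1 0 with hp0 | hp0
  · have n1 : p ∉ tsupport (fun q : ℝ × ℝ => ur q.1 q.2) := fun h => by
      simpa [hp0] using hs1 h
    have n2 : p ∉ tsupport (fun q : ℝ × ℝ => uθ q.1 q.2) := fun h => by
      simpa [hp0] using hs2 h
    have n3 : p ∉ tsupport (fun q : ℝ × ℝ => uz q.1 q.2) := fun h => by
      simpa [hp0] using hs3 h
    have n4 : p ∉ tsupport (fun q : ℝ × ℝ => vr q.1 q.2) := fun h => by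
      simpa [hp0] using hs4 h
    have n5 : p ∉ tsupport (fun q : ℝ × ℝ => vθ q.1 q.2) := fun h => by
      simpa [hp0] using hs5 h
    have n6 : p ∉ tsupport (fun q : ℝ × ℝ => vz q.1 q.2) := fun h => by
      simpa [hp0] using hs6 h
    have z1 : ur p.1 p.2 = 0 := image_eq_zero_of_notMem_tsupport (f := fun q : ℝ × ℝ => ur q.1 q.2) n1
    have z2 : uθ p.1 p.2 = 0 := image_eq_zero_of_notMem_tsupport (f := fun q : ℝ × ℝ => uθ q.1 q.2) n2
    have z3 : uz p.1 p.2 = 0 := image_eq_zero_of_notMem_tsupport (f := fun q : ℝ × ℝ => uz q.1 q.2) n3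
    have z4 : vr p.1 p.2 = 0 := image_eq_zero_of_notMem_tsupport (f := fun q : ℝ × ℝ => vr q.1 q.2) n4
    have z5 : vθ p.1 p.2 = 0 := image_eq_zero_of_notMem_tsupport (f := fun q : ℝ × ℝ => vθ q.1 q.2) n5
    have z6 : vz p.1 p.2 = 0 := image_eq_zero_of_notMem_tsupport (f := fun q : ℝ × ℝ => vz q.1 q.2) n6
    simp [gR, gT, gZ, gD, gM, gC, gG, z1, z2, z3, z4, z5, z6,
      d1_eq_zero n1, d1_eq_zero n2, d1_eq_zero n3, d1_eq_zero n4, d1_eq_zero n5, d1_eq_zero n6,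
      d2_eq_zero n1, d2_eq_zero n2, d2_eq_zero n3, d2_eq_zero n4, d2_eq_zero n5, d2_eq_zero n6,
      hp0]
  · have hr : ((p.1 : ℝ) : ℂ) ≠ 0 := Complex.ofReal_ne_zero.mpr hp0
    have hI : Complex.I ^ 2 = -1 := Complex.I_sq
    simp only [gR, gT, gZ, gD, gM, gC, gG, map_sub, map_add, map_mul, map_div₀,
      Complex.conj_I, Complex.conj_ofReal, map_intCast, map_ofNat]
    field_simp
    ring_nf
    simp only [Complex.I_sq]
    ring_nf

end Pointwise
noncomputable def gH1 (ur uθ vr vθ : ℝ → ℝ → ℂ) : ℝ × ℝ → ℂ := fun q =>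
  uθ q.1 q.2 * (starRingEnd ℂ) (vr q.1 q.2) - ur q.1 q.2 * (starRingEnd ℂ) (vθ q.1 q.2)

noncomputable def gH2 (uθ uz vθ vz : ℝ → ℝ → ℂ) : ℝ × ℝ → ℂ := fun q =>
  uθ q.1 q.2 * (starRingEnd ℂ) (vz q.1 q.2) - uz q.1 q.2 * (starRingEnd ℂ) (vθ q.1 q.2)

theorem tsupport_subset_of_zero {X : ℝ × ℝ → ℂ} {S : Set (ℝ × ℝ)} (hS : IsClosed S)
    (h : ∀ p ∉ S, X p = 0) : tsupport X ⊆ S :=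
  closure_minimal (fun p hp => by by_contra hps; exact hp (h p hps)) hS

/-- For all integers `k` and smooth fields compactly supported in `ω` away from `r = 0`,
`a_k(u,v) = a_2(u,v) + (k² − 4)(u/r, v/r) + i(k − 2) C(u,v)`. -/
theorem ak_from_a2
    (ω : Set (ℝ × ℝ)) (hω : IsOpen ω)
    (ur uθ uz vr vθ vz : ℝ → ℝ → ℂ)
    (hsm : ∀ f ∈ [ur, uθ, uz, vr, vθ, vz],
      ContDiff ℝ (⊤ : ℕ∞) (fun p : ℝ × ℝ => f p.1 p.2) ∧
      HasCompactSupport (fun p : ℝ × ℝ => f p.1 p.2) ∧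
      tsupport (fun p : ℝ × ℝ => f p.1 p.2) ⊆ ω ∩ {p : ℝ × ℝ | 0 < p.1})
    (k : ℤ) :
    ak ω k ur uθ uz vr vθ vz
      = ak ω 2 ur uθ uz vr vθ vz
        + ((k : ℂ)^2 - 4) *
            (wip ω (fun r z => ur r z / (r : ℂ)) (fun r z => vr r z / (r : ℂ))
              + wip ω (fun r z => uθ r z / (r : ℂ)) (fun r z => vθ r z / (r : ℂ))
              + wip ω (fun r z => uz r z / (r : ℂ)) (fun r z => vz r z / (r : ℂ)))
        + Complex.I * ((k : ℂ) - 2) * Cform ω ur uθ vr vθ := by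
  obtain ⟨hur, hcur, hsur⟩ := hsm ur (by simp)
  obtain ⟨huθ, hcuθ, hsuθ⟩ := hsm uθ (by simp)
  obtain ⟨huz, hcuz, hsuz⟩ := hsm uz (by simp)
  obtain ⟨hvr, hcvr, hsvr⟩ := hsm vr (by simp)
  obtain ⟨hvθ, hcvθ, hsvθ⟩ := hsm vθ (by simp)
  obtain ⟨hvz, hcvz, hsvz⟩ := hsm vz (by simp)
  have hs1 := hsur.trans Set.inter_subset_right
  have hs2 := hsuθ.trans Set.inter_subset_right
  have hs3 := hsuz.trans Set.inter_subset_right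
  have hs4 := hsvr.trans Set.inter_subset_right
  have hs5 := hsvθ.trans Set.inter_subset_right
  have hs6 := hsvz.trans Set.inter_subset_right
  have hω1 := hsur.trans Set.inter_subset_left
  have hω2 := hsuθ.trans Set.inter_subset_left
  have hω3 := hsuz.trans Set.inter_subset_left
  -- zero facts
  have zur : ∀ p : ℝ × ℝ, p ∉ tsupport (fun q : ℝ × ℝ => ur q.1 q.2) →
      ur p.1 p.2 = 0 ∧ d1 (fun q : ℝ × ℝ => ur q.1 q.2) p = 0
        ∧ d2 (fun q : ℝ × ℝ => ur q.1 q.2) p = 0 := fun p hp =>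
    ⟨image_eq_zero_of_notMem_tsupport (f := fun q : ℝ × ℝ => ur q.1 q.2) hp,
      d1_eq_zero hp, d2_eq_zero hp⟩
  have zuθ : ∀ p : ℝ × ℝ, p ∉ tsupport (fun q : ℝ × ℝ => uθ q.1 q.2) →
      uθ p.1 p.2 = 0 ∧ d1 (fun q : ℝ × ℝ => uθ q.1 q.2) p = 0
        ∧ d2 (fun q : ℝ × ℝ => uθ q.1 q.2) p = 0 := fun p hp =>
    ⟨image_eq_zero_of_notMem_tsupport (f := fun q : ℝ × ℝ => uθ q.1 q.2) hp,
      d1_eq_zero hp, d2_eq_zero hp⟩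
  have zuz : ∀ p : ℝ × ℝ, p ∉ tsupport (fun q : ℝ × ℝ => uz q.1 q.2) →
      uz p.1 p.2 = 0 ∧ d1 (fun q : ℝ × ℝ => uz q.1 q.2) p = 0
        ∧ d2 (fun q : ℝ × ℝ => uz q.1 q.2) p = 0 := fun p hp =>
    ⟨image_eq_zero_of_notMem_tsupport (f := fun q : ℝ × ℝ => uz q.1 q.2) hp,
      d1_eq_zero hp, d2_eq_zero hp⟩
  -- continuity atoms
  have cR' : Continuous (fun p : ℝ × ℝ => ((p.1 : ℝ) : ℂ)) :=
    Complex.continuous_ofReal.comp continuous_fst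
  have cconj : ∀ {X : ℝ × ℝ → ℂ}, Continuous X →
      Continuous (fun p => (starRingEnd ℂ) (X p)) := fun hX =>
    Complex.continuous_conj.comp hX
  have cdiv_ur := cont_div hur.continuous hs1
  have cdiv_uθ := cont_div huθ.continuous hs2
  have cdiv_uz := cont_div huz.continuous hs3
  have cdiv_vr := cont_div hvr.continuous hs4
  have cdiv_vθ := cont_div hvθ.continuous hs5
  have cdiv_vz := cont_div hvz.continuous hs6
  have cd1ur := cont_d1 hur; have cd2ur := cont_d2 hur
  have cd1uθ := cont_d1 huθ; have cd2uθ := cont_d2 huθ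
  have cd1uz := cont_d1 huz; have cd2uz := cont_d2 huz
  have cd1vr := cont_d1 hvr; have cd2vr := cont_d2 hvr
  have cd1vθ := cont_d1 hvθ; have cd2vθ := cont_d2 hvθ
  have cd1vz := cont_d1 hvz; have cd2vz := cont_d2 hvz
  -- numerators for Z and D parts
  have hZnum_u : ∀ m : ℤ, Continuous (fun p : ℝ × ℝ => (uθ p.1 p.2
      + ((p.1 : ℝ) : ℂ) * d1 (fun q : ℝ × ℝ => uθ q.1 q.2) p
      - Complex.I * (m : ℂ) * ur p.1 p.2) / ((p.1 : ℝ) : ℂ)) := by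
    intro m
    refine cont_div ((huθ.continuous.add (cR'.mul cd1uθ)).sub
      (continuous_const.mul hur.continuous)) ?_
    refine (tsupport_subset_of_zero (isClosed_closure.union isClosed_closure)
      (fun p hp => ?_)).trans (Set.union_subset hs2 hs1)
    obtain ⟨e1, e2, _⟩ := zuθ p (fun h => hp (Or.inl h))
    obtain ⟨f1, _, _⟩ := zur p (fun h => hp (Or.inr h))
    simp [e1, e2, f1]
  have hZnum_v : ∀ m : ℤ, Continuous (fun p : ℝ × ℝ => (vθ p.1 p.2
      + ((p.1 : ℝ) : ℂ) * d1 (fun q : ℝ × ℝ => vθ q.1 q.2) p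
      - Complex.I * (m : ℂ) * vr p.1 p.2) / ((p.1 : ℝ) : ℂ)) := by
    intro m
    refine cont_div ((hvθ.continuous.add (cR'.mul cd1vθ)).sub
      (continuous_const.mul hvr.continuous)) ?_
    refine (tsupport_subset_of_zero (isClosed_closure.union isClosed_closure)
      (fun p hp => ?_)).trans (Set.union_subset hs5 hs4)
    have f1 : vθ p.1 p.2 = 0 :=
      image_eq_zero_of_notMem_tsupport (f := fun q : ℝ × ℝ => vθ q.1 q.2)
        (fun h => hp (Or.inl h))
    have f2 : d1 (fun q : ℝ × ℝ => vθ q.1 q.2) p = 0 := d1_eq_zero (fun h => hp (Or.inl h))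
    have f3 : vr p.1 p.2 = 0 :=
      image_eq_zero_of_notMem_tsupport (f := fun q : ℝ × ℝ => vr q.1 q.2)
        (fun h => hp (Or.inr h))
    simp [f1, f2, f3]
  have hDnum_u : Continuous (fun p : ℝ × ℝ => (ur p.1 p.2
      + ((p.1 : ℝ) : ℂ) * d1 (fun q : ℝ × ℝ => ur q.1 q.2) p) / ((p.1 : ℝ) : ℂ)) := by
    refine cont_div (hur.continuous.add (cR'.mul cd1ur)) ?_
    refine (tsupport_subset_of_zero isClosed_closure (fun p hp => ?_)).trans hs1
    obtain ⟨e1, e2, _⟩ := zur p hp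
    simp [e1, e2]
  have hDnum_v : Continuous (fun p : ℝ × ℝ => (vr p.1 p.2
      + ((p.1 : ℝ) : ℂ) * d1 (fun q : ℝ × ℝ => vr q.1 q.2) p) / ((p.1 : ℝ) : ℂ)) := by
    refine cont_div (hvr.continuous.add (cR'.mul cd1vr)) ?_
    refine (tsupport_subset_of_zero isClosed_closure (fun p hp => ?_)).trans hs4
    have f1 : vr p.1 p.2 = 0 :=
      image_eq_zero_of_notMem_tsupport (f := fun q : ℝ × ℝ => vr q.1 q.2) hp
    have f2 : d1 (fun q : ℝ × ℝ => vr q.1 q.2) p = 0 := d1_eq_zero hp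
    simp [f1, f2]
  -- integrability of the canonical integrands
  have hiR : ∀ m : ℤ, IntegrableOn (gR uθ uz vθ vz m) ω := by
    intro m
    refine (Continuous.integrable_of_hasCompactSupport ?_ ?_).integrableOn
    · exact (((continuous_const.mul cdiv_uz).sub cd2uθ).mul
        (cconj ((continuous_const.mul cdiv_vz).sub cd2vθ))).mul cR'
    · refine HasCompactSupport.intro (IsCompact.union hcuz hcuθ) (fun p hp => ?_)
      obtain ⟨e1, _, _⟩ := zuz p (fun h => hp (Or.inl h))
      obtain ⟨_, _, f3⟩ := zuθ p (fun h => hp (Or.inr h))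
      simp [gR, e1, f3]
  have hiT : IntegrableOn (gT ur uz vr vz) ω := by
    refine (Continuous.integrable_of_hasCompactSupport ?_ ?_).integrableOn
    · exact ((cd2ur.sub cd1uz).mul (cconj (cd2vr.sub cd1vz))).mul cR'
    · refine HasCompactSupport.intro (IsCompact.union hcur hcuz) (fun p hp => ?_)
      obtain ⟨_, _, e3⟩ := zur p (fun h => hp (Or.inl h))
      obtain ⟨_, f2, _⟩ := zuz p (fun h => hp (Or.inr h))
      simp [gT, e3, f2]
  have hiZ : ∀ m : ℤ, IntegrableOn (gZ ur uθ vr vθ m) ω := by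
    intro m
    refine (Continuous.integrable_of_hasCompactSupport ?_ ?_).integrableOn
    · exact ((hZnum_u m).mul (cconj (hZnum_v m))).mul cR'
    · refine HasCompactSupport.intro (IsCompact.union hcuθ hcur) (fun p hp => ?_)
      obtain ⟨e1, e2, _⟩ := zuθ p (fun h => hp (Or.inl h))
      obtain ⟨f1, _, _⟩ := zur p (fun h => hp (Or.inr h))
      simp [gZ, e1, e2, f1]
  have hiD : ∀ m : ℤ, IntegrableOn (gD ur uθ uz vr vθ vz m) ω := by
    intro m
    refine (Continuous.integrable_of_hasCompactSupport ?_ ?_).integrableOn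
    · exact (((hDnum_u.add (continuous_const.mul cdiv_uθ)).add cd2uz).mul
        (cconj ((hDnum_v.add (continuous_const.mul cdiv_vθ)).add cd2vz))).mul cR'
    · refine HasCompactSupport.intro
        (IsCompact.union (IsCompact.union hcur hcuθ) hcuz) (fun p hp => ?_)
      obtain ⟨e1, e2, _⟩ := zur p (fun h => hp (Or.inl (Or.inl h)))
      obtain ⟨f1, _, _⟩ := zuθ p (fun h => hp (Or.inl (Or.inr h)))
      obtain ⟨_, _, g3⟩ := zuz p (fun h => hp (Or.inr h))
      simp [gD, e1, e2, f1, g3]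
  have hiM1 : IntegrableOn (fun p : ℝ × ℝ => (ur p.1 p.2 / ((p.1 : ℝ) : ℂ))
      * (starRingEnd ℂ) (vr p.1 p.2 / ((p.1 : ℝ) : ℂ)) * ((p.1 : ℝ) : ℂ)) ω := by
    refine (Continuous.integrable_of_hasCompactSupport
      ((cdiv_ur.mul (cconj cdiv_vr)).mul cR') ?_).integrableOn
    refine HasCompactSupport.intro hcur (fun p hp => ?_)
    obtain ⟨e1, _, _⟩ := zur p hp
    simp [e1]
  have hiM2 : IntegrableOn (fun p : ℝ × ℝ => (uθ p.1 p.2 / ((p.1 : ℝ) : ℂ))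
      * (starRingEnd ℂ) (vθ p.1 p.2 / ((p.1 : ℝ) : ℂ)) * ((p.1 : ℝ) : ℂ)) ω := by
    refine (Continuous.integrable_of_hasCompactSupport
      ((cdiv_uθ.mul (cconj cdiv_vθ)).mul cR') ?_).integrableOn
    refine HasCompactSupport.intro hcuθ (fun p hp => ?_)
    obtain ⟨e1, _, _⟩ := zuθ p hp
    simp [e1]
  have hiM3 : IntegrableOn (fun p : ℝ × ℝ => (uz p.1 p.2 / ((p.1 : ℝ) : ℂ))
      * (starRingEnd ℂ) (vz p.1 p.2 / ((p.1 : ℝ) : ℂ)) * ((p.1 : ℝ) : ℂ)) ω := by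
    refine (Continuous.integrable_of_hasCompactSupport
      ((cdiv_uz.mul (cconj cdiv_vz)).mul cR') ?_).integrableOn
    refine HasCompactSupport.intro hcuz (fun p hp => ?_)
    obtain ⟨e1, _, _⟩ := zuz p hp
    simp [e1]
  have hiM : IntegrableOn (gM ur uθ uz vr vθ vz) ω := (hiM1.add hiM2).add hiM3
  have hiC : IntegrableOn (gC ur uθ vr vθ) ω := by
    refine (Continuous.integrable_of_hasCompactSupport ?_ ?_).integrableOn
    · refine cont_div (continuous_const.mul ((huθ.continuous.mul (cconj hvr.continuous)).sub
        (hur.continuous.mul (cconj hvθ.continuous)))) ?_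
      refine (tsupport_subset_of_zero (isClosed_closure.union isClosed_closure)
        (fun p hp => ?_)).trans (Set.union_subset hs2 hs1)
      obtain ⟨e1, _, _⟩ := zuθ p (fun h => hp (Or.inl h))
      obtain ⟨f1, _, _⟩ := zur p (fun h => hp (Or.inr h))
      simp [e1, f1]
    · refine HasCompactSupport.intro (IsCompact.union hcuθ hcur) (fun p hp => ?_)
      obtain ⟨e1, _, _⟩ := zuθ p (fun h => hp (Or.inl h))
      obtain ⟨f1, _, _⟩ := zur p (fun h => hp (Or.inr h))
      simp [gC, e1, f1]
  have hcsG : HasCompactSupport (gG ur uθ uz vr vθ vz) := by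
    refine HasCompactSupport.intro
      (IsCompact.union (IsCompact.union hcur hcuθ) hcuz) (fun p hp => ?_)
    obtain ⟨e1, e2, e3⟩ := zur p (fun h => hp (Or.inl (Or.inl h)))
    obtain ⟨f1, f2, f3⟩ := zuθ p (fun h => hp (Or.inl (Or.inr h)))
    obtain ⟨g1, g2, g3⟩ := zuz p (fun h => hp (Or.inr h))
    simp [gG, e1, e2, e3, f1, f2, f3, g1, g2, g3]
  have hcontG : Continuous (gG ur uθ uz vr vθ vz) := by
    have cA : Continuous (fun p : ℝ × ℝ => d1 (fun q : ℝ × ℝ => uθ q.1 q.2) p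
        * (starRingEnd ℂ) (vr p.1 p.2)
        + uθ p.1 p.2 * (starRingEnd ℂ) (d1 (fun q : ℝ × ℝ => vr q.1 q.2) p)
        - d1 (fun q : ℝ × ℝ => ur q.1 q.2) p * (starRingEnd ℂ) (vθ p.1 p.2)
        - ur p.1 p.2 * (starRingEnd ℂ) (d1 (fun q : ℝ × ℝ => vθ q.1 q.2) p)) :=
      (((cd1uθ.mul (cconj hvr.continuous)).add
        (huθ.continuous.mul (cconj cd1vr))).sub
        (cd1ur.mul (cconj hvθ.continuous))).sub
        (hur.continuous.mul (cconj cd1vθ))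
    have cB : Continuous (fun p : ℝ × ℝ => d2 (fun q : ℝ × ℝ => uθ q.1 q.2) p
        * (starRingEnd ℂ) (vz p.1 p.2)
        + uθ p.1 p.2 * (starRingEnd ℂ) (d2 (fun q : ℝ × ℝ => vz q.1 q.2) p)
        - d2 (fun q : ℝ × ℝ => uz q.1 q.2) p * (starRingEnd ℂ) (vθ p.1 p.2)
        - uz p.1 p.2 * (starRingEnd ℂ) (d2 (fun q : ℝ × ℝ => vθ q.1 q.2) p)) :=
      (((cd2uθ.mul (cconj hvz.continuous)).add
        (huθ.continuous.mul (cconj cd2vz))).sub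
        (cd2uz.mul (cconj hvθ.continuous))).sub
        (huz.continuous.mul (cconj cd2vθ))
    exact cA.add cB
  have hiG : IntegrableOn (gG ur uθ uz vr vθ vz) ω :=
    (hcontG.integrable_of_hasCompactSupport hcsG).integrableOn
  -- ak in canonical form
  have hak : ∀ m : ℤ, ak ω m ur uθ uz vr vθ vz
      = ∫ p in ω, (gR uθ uz vθ vz m p + gT ur uz vr vz p + gZ ur uθ vr vθ m p
          + gD ur uθ uz vr vθ vz m p) := by
    intro m
    rw [ak, wip_curlkR ω m uθ uz vθ vz huθ hvθ, wip_curlkTheta ω ur uz vr vz hur huz hvr hvz,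
      wip_curlkZ ω m ur uθ vr vθ huθ hvθ, wip_divk ω m ur uθ uz vr vθ vz hur huz hvr hvz]
    have s1 : ∫ p in ω, (gR uθ uz vθ vz m p + gT ur uz vr vz p + gZ ur uθ vr vθ m p
          + gD ur uθ uz vr vθ vz m p)
        = (∫ p in ω, (gR uθ uz vθ vz m p + gT ur uz vr vz p + gZ ur uθ vr vθ m p))
          + ∫ p in ω, gD ur uθ uz vr vθ vz m p :=
      integral_add (((hiR m).add hiT).add (hiZ m)) (hiD m)
    have s2 : ∫ p in ω, (gR uθ uz vθ vz m p + gT ur uz vr vz p + gZ ur uθ vr vθ m p)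
        = (∫ p in ω, (gR uθ uz vθ vz m p + gT ur uz vr vz p))
          + ∫ p in ω, gZ ur uθ vr vθ m p :=
      integral_add ((hiR m).add hiT) (hiZ m)
    have s3 : ∫ p in ω, (gR uθ uz vθ vz m p + gT ur uz vr vz p)
        = (∫ p in ω, gR uθ uz vθ vz m p) + ∫ p in ω, gT ur uz vr vz p :=
      integral_add (hiR m) hiT
    rw [s1, s2, s3]
  -- mass terms
  have hMass : wip ω (fun r z => ur r z / (r : ℂ)) (fun r z => vr r z / (r : ℂ))
      + wip ω (fun r z => uθ r z / (r : ℂ)) (fun r z => vθ r z / (r : ℂ))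
      + wip ω (fun r z => uz r z / (r : ℂ)) (fun r z => vz r z / (r : ℂ))
      = ∫ p in ω, gM ur uθ uz vr vθ vz p := by
    have s1 : ∫ p in ω, gM ur uθ uz vr vθ vz p
        = (∫ p in ω, ((ur p.1 p.2 / ((p.1 : ℝ) : ℂ))
            * (starRingEnd ℂ) (vr p.1 p.2 / ((p.1 : ℝ) : ℂ)) * ((p.1 : ℝ) : ℂ)
            + (uθ p.1 p.2 / ((p.1 : ℝ) : ℂ))
            * (starRingEnd ℂ) (vθ p.1 p.2 / ((p.1 : ℝ) : ℂ)) * ((p.1 : ℝ) : ℂ)))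
          + ∫ p in ω, (uz p.1 p.2 / ((p.1 : ℝ) : ℂ))
            * (starRingEnd ℂ) (vz p.1 p.2 / ((p.1 : ℝ) : ℂ)) * ((p.1 : ℝ) : ℂ) :=
      integral_add (hiM1.add hiM2) hiM3
    have s2 : ∫ p in ω, ((ur p.1 p.2 / ((p.1 : ℝ) : ℂ))
            * (starRingEnd ℂ) (vr p.1 p.2 / ((p.1 : ℝ) : ℂ)) * ((p.1 : ℝ) : ℂ)
            + (uθ p.1 p.2 / ((p.1 : ℝ) : ℂ))
            * (starRingEnd ℂ) (vθ p.1 p.2 / ((p.1 : ℝ) : ℂ)) * ((p.1 : ℝ) : ℂ))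
        = (∫ p in ω, (ur p.1 p.2 / ((p.1 : ℝ) : ℂ))
            * (starRingEnd ℂ) (vr p.1 p.2 / ((p.1 : ℝ) : ℂ)) * ((p.1 : ℝ) : ℂ))
          + ∫ p in ω, (uθ p.1 p.2 / ((p.1 : ℝ) : ℂ))
            * (starRingEnd ℂ) (vθ p.1 p.2 / ((p.1 : ℝ) : ℂ)) * ((p.1 : ℝ) : ℂ) :=
      integral_add hiM1 hiM2
    rw [s1, s2, wip, wip, wip]
  -- C form
  have hCf : Cform ω ur uθ vr vθ = ∫ p in ω, gC ur uθ vr vθ p := rfl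
  -- the divergence term integrates to zero
  have hH1 : ContDiff ℝ (⊤ : ℕ∞) (gH1 ur uθ vr vθ) := by
    have hcvr' : ContDiff ℝ (⊤ : ℕ∞) (fun q : ℝ × ℝ => (starRingEnd ℂ) (vr q.1 q.2)) := by
      exact
        (Complex.conjCLE.toContinuousLinearMap.contDiff (n := (⊤ : ℕ∞))).comp hvr
    have hcvθ' : ContDiff ℝ (⊤ : ℕ∞) (fun q : ℝ × ℝ => (starRingEnd ℂ) (vθ q.1 q.2)) := by
      exact
        (Complex.conjCLE.toContinuousLinearMap.contDiff (n := (⊤ : ℕ∞))).comp hvθ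
    exact (huθ.mul hcvr').sub (hur.mul hcvθ')
  have hH2 : ContDiff ℝ (⊤ : ℕ∞) (gH2 uθ uz vθ vz) := by
    have hcvz' : ContDiff ℝ (⊤ : ℕ∞) (fun q : ℝ × ℝ => (starRingEnd ℂ) (vz q.1 q.2)) := by
      exact
        (Complex.conjCLE.toContinuousLinearMap.contDiff (n := (⊤ : ℕ∞))).comp hvz
    have hcvθ' : ContDiff ℝ (⊤ : ℕ∞) (fun q : ℝ × ℝ => (starRingEnd ℂ) (vθ q.1 q.2)) := by
      exact
        (Complex.conjCLE.toContinuousLinearMap.contDiff (n := (⊤ : ℕ∞))).comp hvθ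
    exact (huθ.mul hcvz').sub (huz.mul hcvθ')
  have hH1c : HasCompactSupport (gH1 ur uθ vr vθ) := by
    refine HasCompactSupport.intro (IsCompact.union hcuθ hcur) (fun p hp => ?_)
    obtain ⟨e1, _, _⟩ := zuθ p (fun h => hp (Or.inl h))
    obtain ⟨f1, _, _⟩ := zur p (fun h => hp (Or.inr h))
    simp [gH1, e1, f1]
  have hH2c : HasCompactSupport (gH2 uθ uz vθ vz) := by
    refine HasCompactSupport.intro (IsCompact.union hcuθ hcuz) (fun p hp => ?_)
    obtain ⟨e1, _, _⟩ := zuθ p (fun h => hp (Or.inl h))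
    obtain ⟨f1, _, _⟩ := zuz p (fun h => hp (Or.inr h))
    simp [gH2, e1, f1]
  have hstar1 : ∀ (g : ℝ → ℝ → ℂ), ContDiff ℝ (⊤ : ℕ∞) (fun q : ℝ × ℝ => g q.1 q.2) →
      ∀ p : ℝ × ℝ, HasDerivAt (fun r' => (starRingEnd ℂ) (g r' p.2))
        ((starRingEnd ℂ) (d1 (fun q : ℝ × ℝ => g q.1 q.2) p)) p.1 := fun g hg p => by
    simpa [Complex.star_def] using
      (hasDerivAt_slice1 (hg.differentiable (by simp)) p.1 p.2).star
  have hstar2 : ∀ (g : ℝ → ℝ → ℂ), ContDiff ℝ (⊤ : ℕ∞) (fun q : ℝ × ℝ => g q.1 q.2) →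
      ∀ p : ℝ × ℝ, HasDerivAt (fun z' => (starRingEnd ℂ) (g p.1 z'))
        ((starRingEnd ℂ) (d2 (fun q : ℝ × ℝ => g q.1 q.2) p)) p.2 := fun g hg p => by
    simpa [Complex.star_def] using
      (hasDerivAt_slice2 (hg.differentiable (by simp)) p.1 p.2).star
  have hGsplit : ∀ p : ℝ × ℝ, gG ur uθ uz vr vθ vz p
      = d1 (gH1 ur uθ vr vθ) p + d2 (gH2 uθ uz vθ vz) p := by
    intro p
    have e1 : HasDerivAt (fun r' => uθ r' p.2 * (starRingEnd ℂ) (vr r' p.2)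
        - ur r' p.2 * (starRingEnd ℂ) (vθ r' p.2))
        ((d1 (fun q : ℝ × ℝ => uθ q.1 q.2) p * (starRingEnd ℂ) (vr p.1 p.2)
            + uθ p.1 p.2 * (starRingEnd ℂ) (d1 (fun q : ℝ × ℝ => vr q.1 q.2) p))
          - (d1 (fun q : ℝ × ℝ => ur q.1 q.2) p * (starRingEnd ℂ) (vθ p.1 p.2)
            + ur p.1 p.2 * (starRingEnd ℂ) (d1 (fun q : ℝ × ℝ => vθ q.1 q.2) p))) p.1 :=
      ((hasDerivAt_slice1 (huθ.differentiable (by simp)) p.1 p.2).mul (hstar1 vr hvr p)).sub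
        ((hasDerivAt_slice1 (hur.differentiable (by simp)) p.1 p.2).mul (hstar1 vθ hvθ p))
    have e2 : HasDerivAt (fun z' => uθ p.1 z' * (starRingEnd ℂ) (vz p.1 z')
        - uz p.1 z' * (starRingEnd ℂ) (vθ p.1 z'))
        ((d2 (fun q : ℝ × ℝ => uθ q.1 q.2) p * (starRingEnd ℂ) (vz p.1 p.2)
            + uθ p.1 p.2 * (starRingEnd ℂ) (d2 (fun q : ℝ × ℝ => vz q.1 q.2) p))
          - (d2 (fun q : ℝ × ℝ => uz q.1 q.2) p * (starRingEnd ℂ) (vθ p.1 p.2)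
            + uz p.1 p.2 * (starRingEnd ℂ) (d2 (fun q : ℝ × ℝ => vθ q.1 q.2) p))) p.2 :=
      ((hasDerivAt_slice2 (huθ.differentiable (by simp)) p.1 p.2).mul (hstar2 vz hvz p)).sub
        ((hasDerivAt_slice2 (huz.differentiable (by simp)) p.1 p.2).mul (hstar2 vθ hvθ p))
    have hd1 : d1 (gH1 ur uθ vr vθ) p
        = (d1 (fun q : ℝ × ℝ => uθ q.1 q.2) p * (starRingEnd ℂ) (vr p.1 p.2)
            + uθ p.1 p.2 * (starRingEnd ℂ) (d1 (fun q : ℝ × ℝ => vr q.1 q.2) p))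
          - (d1 (fun q : ℝ × ℝ => ur q.1 q.2) p * (starRingEnd ℂ) (vθ p.1 p.2)
            + ur p.1 p.2 * (starRingEnd ℂ) (d1 (fun q : ℝ × ℝ => vθ q.1 q.2) p)) :=
      (hasDerivAt_slice1 (hH1.differentiable (by simp)) p.1 p.2).unique e1
    have hd2 : d2 (gH2 uθ uz vθ vz) p
        = (d2 (fun q : ℝ × ℝ => uθ q.1 q.2) p * (starRingEnd ℂ) (vz p.1 p.2)
            + uθ p.1 p.2 * (starRingEnd ℂ) (d2 (fun q : ℝ × ℝ => vz q.1 q.2) p))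
          - (d2 (fun q : ℝ × ℝ => uz q.1 q.2) p * (starRingEnd ℂ) (vθ p.1 p.2)
            + uz p.1 p.2 * (starRingEnd ℂ) (d2 (fun q : ℝ × ℝ => vθ q.1 q.2) p)) :=
      (hasDerivAt_slice2 (hH2.differentiable (by simp)) p.1 p.2).unique e2
    rw [hd1, hd2, gG]
    ring
  have hGzero : (∫ p in ω, gG ur uθ uz vr vθ vz p) = 0 := by
    have hset : (∫ p in ω, gG ur uθ uz vr vθ vz p) = ∫ p : ℝ × ℝ, gG ur uθ uz vr vθ vz p := by
      refine setIntegral_eq_integral_of_forall_compl_eq_zero (fun p hp => ?_)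
      obtain ⟨e1, e2, e3⟩ := zur p (fun h => hp (hω1 h))
      obtain ⟨f1, f2, f3⟩ := zuθ p (fun h => hp (hω2 h))
      obtain ⟨g1, g2, g3⟩ := zuz p (fun h => hp (hω3 h))
      simp [gG, e1, e2, e3, f1, f2, f3, g1, g2, g3]
    rw [hset, show (fun p : ℝ × ℝ => gG ur uθ uz vr vθ vz p)
        = fun p => d1 (gH1 ur uθ vr vθ) p + d2 (gH2 uθ uz vθ vz) p from funext hGsplit]
    have i1 : Integrable (d1 (gH1 ur uθ vr vθ)) :=
      (cont_d1 hH1).integrable_of_hasCompactSupport (hcs_d1 hH1c)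
    have i2 : Integrable (d2 (gH2 uθ uz vθ vz)) :=
      (cont_d2 hH2).integrable_of_hasCompactSupport (hcs_d2 hH2c)
    rw [integral_add i1 i2, integral_d1_eq_zero hH1 hH1c, integral_d2_eq_zero hH2 hH2c,
      add_zero]
  -- main computation
  rw [hak k, hak 2, hMass, hCf]
  have hptw : ∀ p : ℝ × ℝ, (gR uθ uz vθ vz k p + gT ur uz vr vz p + gZ ur uθ vr vθ k p
        + gD ur uθ uz vr vθ vz k p)
      = (gR uθ uz vθ vz 2 p + gT ur uz vr vz p + gZ ur uθ vr vθ 2 p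
          + gD ur uθ uz vr vθ vz 2 p
          + ((k : ℂ) ^ 2 - 4) * gM ur uθ uz vr vθ vz p
          + Complex.I * ((k : ℂ) - 2) * gC ur uθ vr vθ p)
        + Complex.I * ((k : ℂ) - 2) * gG ur uθ uz vr vθ vz p := fun p => by
    rw [pointwise_key ur uθ uz vr vθ vz hs1 hs2 hs3 hs4 hs5 hs6 k p]
  rw [integral_congr_ae (MeasureTheory.ae_of_all _ hptw)]
  have iA : IntegrableOn (fun p => gR uθ uz vθ vz 2 p + gT ur uz vr vz p
      + gZ ur uθ vr vθ 2 p + gD ur uθ uz vr vθ vz 2 p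
      + ((k : ℂ) ^ 2 - 4) * gM ur uθ uz vr vθ vz p
      + Complex.I * ((k : ℂ) - 2) * gC ur uθ vr vθ p) ω :=
    (((((hiR 2).add hiT).add (hiZ 2)).add (hiD 2)).add
      (hiM.const_mul _)).add (hiC.const_mul _)
  have sfin : ∫ p in ω, ((gR uθ uz vθ vz 2 p + gT ur uz vr vz p + gZ ur uθ vr vθ 2 p
        + gD ur uθ uz vr vθ vz 2 p
        + ((k : ℂ) ^ 2 - 4) * gM ur uθ uz vr vθ vz p
        + Complex.I * ((k : ℂ) - 2) * gC ur uθ vr vθ p)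
      + Complex.I * ((k : ℂ) - 2) * gG ur uθ uz vr vθ vz p)
      = (∫ p in ω, (gR uθ uz vθ vz 2 p + gT ur uz vr vz p + gZ ur uθ vr vθ 2 p
          + gD ur uθ uz vr vθ vz 2 p
          + ((k : ℂ) ^ 2 - 4) * gM ur uθ uz vr vθ vz p
          + Complex.I * ((k : ℂ) - 2) * gC ur uθ vr vθ p))
        + ∫ p in ω, Complex.I * ((k : ℂ) - 2) * gG ur uθ uz vr vθ vz p :=
    integral_add iA (hiG.const_mul _)
  have s5 : ∫ p in ω, (gR uθ uz vθ vz 2 p + gT ur uz vr vz p + gZ ur uθ vr vθ 2 p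
        + gD ur uθ uz vr vθ vz 2 p
        + ((k : ℂ) ^ 2 - 4) * gM ur uθ uz vr vθ vz p
        + Complex.I * ((k : ℂ) - 2) * gC ur uθ vr vθ p)
      = (∫ p in ω, (gR uθ uz vθ vz 2 p + gT ur uz vr vz p + gZ ur uθ vr vθ 2 p
          + gD ur uθ uz vr vθ vz 2 p
          + ((k : ℂ) ^ 2 - 4) * gM ur uθ uz vr vθ vz p))
        + ∫ p in ω, Complex.I * ((k : ℂ) - 2) * gC ur uθ vr vθ p :=
    integral_add (((((hiR 2).add hiT).add (hiZ 2)).add (hiD 2)).add (hiM.const_mul _))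
      (hiC.const_mul _)
  have s6 : ∫ p in ω, (gR uθ uz vθ vz 2 p + gT ur uz vr vz p + gZ ur uθ vr vθ 2 p
        + gD ur uθ uz vr vθ vz 2 p
        + ((k : ℂ) ^ 2 - 4) * gM ur uθ uz vr vθ vz p)
      = (∫ p in ω, (gR uθ uz vθ vz 2 p + gT ur uz vr vz p + gZ ur uθ vr vθ 2 p
          + gD ur uθ uz vr vθ vz 2 p))
        + ∫ p in ω, ((k : ℂ) ^ 2 - 4) * gM ur uθ uz vr vθ vz p :=
    integral_add ((((hiR 2).add hiT).add (hiZ 2)).add (hiD 2)) (hiM.const_mul _)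
  have m1 : ∫ p in ω, ((k : ℂ) ^ 2 - 4) * gM ur uθ uz vr vθ vz p
      = ((k : ℂ) ^ 2 - 4) * ∫ p in ω, gM ur uθ uz vr vθ vz p := integral_const_mul _ _
  have m2 : ∫ p in ω, Complex.I * ((k : ℂ) - 2) * gC ur uθ vr vθ p
      = Complex.I * ((k : ℂ) - 2) * ∫ p in ω, gC ur uθ vr vθ p := integral_const_mul _ _
  have m3 : ∫ p in ω, Complex.I * ((k : ℂ) - 2) * gG ur uθ uz vr vθ vz p
      = Complex.I * ((k : ℂ) - 2) * ∫ p in ω, gG ur uθ uz vr vθ vz p := integral_const_mul _ _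
  rw [sfin, s5, s6, m1, m2, m3, hGzero, mul_zero, add_zero]
end

section
/- If a is a bounded coercive Hermitian form on a complex Hilbert space H, R ⊆ H a closed subspace, S its a-orthogonal complement, u ∈ H the unique solution of a(u, v) = ℓ(v) for all v ∈ H (ℓ a bounded linear functional), and u = u_R + C s for a fixed nonzero s ∈ S with u_R ∈ R, then the pair (u_R, C) is the unique solution of the coupled system: a(u_R, v) + C a(s, v) = ℓ(v) for all v ∈ R, and a(u_R, s) + C a(s, s) = ℓ(s); moreover a(u_R, s) = 0 and C = ℓ(s)/a(s,s). -/
open ComplexConjugate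

/-!
Substituting `u = u_R + C s` into `a(u, v) = ℓ(v)` gives both equations of the system, and
`a(u_R, s) = conj a(s, u_R) = 0` since `s` is `a`-orthogonal to `R`. For uniqueness, the second
equation reduces to `C' a(s, s) = ℓ(s)` with `a(s, s) ≠ 0` by coercivity, which fixes `C'`; then
`u_R' - u_R ∈ R` is `a`-orthogonal to `R`, in particular to itself, so it vanishes by coercivity.
-/

section CoerciveForm

variable {H : Type*} [NormedAddCommGroup H] {a : H → H → ℂ}

theorem eq_zero_of_coercive_of_apply_self_eq_zero {cc : ℝ} (hcc : 0 < cc)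
    (hcoer : ∀ x, cc * ‖x‖ ^ 2 ≤ (a x x).re) {x : H} (hx : a x x = 0) : x = 0 := by
  by_contra hne
  have hpos : 0 < cc * ‖x‖ ^ 2 := mul_pos hcc (pow_pos (norm_pos_iff.mpr hne) 2)
  have hle := hcoer x
  rw [hx, Complex.zero_re] at hle
  linarith

theorem apply_sub_left (hadd₁ : ∀ x x' y, a (x + x') y = a x y + a x' y) (x y v : H) :
    a (x - y) v = a x v - a y v :=
  (AddMonoidHom.mk' (a · v) fun x x' => hadd₁ x x' v).map_sub x y

theorem eq_of_coercive_of_forall_mem_apply_eq (hadd₁ : ∀ x x' y, a (x + x') y = a x y + a x' y)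
    {cc : ℝ} (hcc : 0 < cc) (hcoer : ∀ x, cc * ‖x‖ ^ 2 ≤ (a x x).re) {R : AddSubgroup H}
    {x y : H} (hx : x ∈ R) (hy : y ∈ R) (h : ∀ v ∈ R, a x v = a y v) : x = y := by
  refine sub_eq_zero.mp (eq_zero_of_coercive_of_apply_self_eq_zero hcc hcoer ?_)
  rw [apply_sub_left hadd₁, h _ (R.sub_mem hx hy), sub_self]

end CoerciveForm

theorem scm_coupled_system_general
    {H : Type*} [NormedAddCommGroup H] [InnerProductSpace ℂ H]
    (a : H → H → ℂ)
    (hadd₁ : ∀ x x' y, a (x + x') y = a x y + a x' y)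
    (hsmul₁ : ∀ (c : ℂ) x y, a (c • x) y = c * a x y)
    (hherm : ∀ x y, a x y = conj (a y x))
    (cc : ℝ) (hcc : 0 < cc) (hcoer : ∀ x, cc * ‖x‖ ^ 2 ≤ (a x x).re)
    (R : Submodule ℂ H)
    (s : H) (hs0 : s ≠ 0)
    -- s lies in the a-orthogonal complement S of R, and spans it
    (hsS : ∀ v ∈ R, a s v = 0)
    (ℓ : H → ℂ) (u uR : H) (C : ℂ)
    (hu : ∀ v, a u v = ℓ v)
    (hdec : u = uR + C • s) (huR : uR ∈ R) :
    ((∀ v ∈ R, a uR v + C * a s v = ℓ v) ∧ (a uR s + C * a s s = ℓ s)) ∧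
    a uR s = 0 ∧
    C = ℓ s / a s s ∧
    (∀ uR' : H, ∀ C' : ℂ, uR' ∈ R →
      (∀ v ∈ R, a uR' v + C' * a s v = ℓ v) → (a uR' s + C' * a s s = ℓ s) →
      uR' = uR ∧ C' = C) := by
  have hsol : ∀ v, a uR v + C * a s v = ℓ v := fun v => by rw [← hu v, hdec, hadd₁, hsmul₁]
  have horth : ∀ x ∈ R, a x s = 0 := fun x hx => by rw [hherm, hsS x hx, map_zero]
  have hss : a s s ≠ 0 := fun h => hs0 (eq_zero_of_coercive_of_apply_self_eq_zero hcc hcoer h)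
  have hC : C * a s s = ℓ s := by simpa only [horth uR huR, zero_add] using hsol s
  refine ⟨⟨fun v _ => hsol v, hsol s⟩, horth uR huR, eq_div_of_mul_eq hss hC, ?_⟩
  intro uR' C' huR' h₁ h₂
  have hC' : C' = C := mul_right_cancel₀ hss (by rw [hC, ← h₂, horth uR' huR', zero_add])
  refine ⟨eq_of_coercive_of_forall_mem_apply_eq (R := R.toAddSubgroup) hadd₁ hcc hcoer huR' huR
    fun v hv => ?_, hC'⟩
  simpa only [hsS v hv, mul_zero, add_zero] using (h₁ v hv).trans (hsol v).symm

/-- Abstract Singular Complement Method coupled system: `a` bounded coercive Hermitian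
on a complex Hilbert space `H`, `R` a closed subspace, `S` its `a`-orthogonal complement
spanned by the single nonzero element `s`, `u` the solution of `a(u,v) = ℓ(v)` for all
`v`, decomposed as `u = u_R + C • s` with `u_R ∈ R`.  Then `(u_R, C)` is the unique
solution of the coupled system `a(u_R,v) + C a(s,v) = ℓ(v)` (`v ∈ R`) and
`a(u_R,s) + C a(s,s) = ℓ(s)`; moreover `a(u_R,s) = 0` and `C = ℓ(s)/a(s,s)`. -/
theorem scm_coupled_system
    {H : Type*} [NormedAddCommGroup H] [InnerProductSpace ℂ H] [CompleteSpace H]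
    (a : H → H → ℂ)
    (hadd₁ : ∀ x x' y, a (x + x') y = a x y + a x' y)
    (hadd₂ : ∀ x y y', a x (y + y') = a x y + a x y')
    (hsmul₁ : ∀ (c : ℂ) x y, a (c • x) y = c * a x y)
    (hsmul₂ : ∀ (c : ℂ) x y, a x (c • y) = conj c * a x y)
    (hherm : ∀ x y, a x y = conj (a y x))
    (Mb : ℝ) (hbound : ∀ x y, ‖a x y‖ ≤ Mb * ‖x‖ * ‖y‖)
    (cc : ℝ) (hcc : 0 < cc) (hcoer : ∀ x, cc * ‖x‖ ^ 2 ≤ (a x x).re)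
    (R : Submodule ℂ H) (hR : IsClosed (R : Set H))
    (s : H) (hs0 : s ≠ 0)
    -- s lies in the a-orthogonal complement S of R, and spans it
    (hsS : ∀ v ∈ R, a s v = 0)
    (hspan : ∀ t : H, (∀ v ∈ R, a t v = 0) → ∃ c : ℂ, t = c • s)
    (ℓ : H → ℂ) (u uR : H) (C : ℂ)
    (hu : ∀ v, a u v = ℓ v)
    (hdec : u = uR + C • s) (huR : uR ∈ R) :
    ((∀ v ∈ R, a uR v + C * a s v = ℓ v) ∧ (a uR s + C * a s s = ℓ s)) ∧
    a uR s = 0 ∧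
    C = ℓ s / a s s ∧
    (∀ uR' : H, ∀ C' : ℂ, uR' ∈ R →
      (∀ v ∈ R, a uR' v + C' * a s v = ℓ v) → (a uR' s + C' * a s s = ℓ s) →
      uR' = uR ∧ C' = C) :=
  scm_coupled_system_general a hadd₁ hsmul₁ hherm cc hcc hcoer R s hs0 hsS ℓ u uR C hu hdec huR
end
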